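/- arXiv:2001.06676 — 8 statements merged into one kernel-verified Lean document; each statement's English description precedes it below -/
import Mathlib

section
/- Let G = (A;E) be a simple graph, let g : A³ → A be an injection of behaviour majority or of behaviour minority, let {O,P} = {E,N}, and let R ⊆ A⁴ be a quaternary relation preserved by g that contains a PO-tuple. If R contains an OP-tuple t with t[i] ≠ t[j] for some fixed distinct indices i,j ∈ {1,2,3,4}, then R also contains a PO-tuple t′ with t′[i] ≠ t′[j]. -/
universe u

variable {A : Type u}

/-- Non-adjacency relation `N` of a graph with edge relation `E`. -/
def NRel (E : A → A → Prop) (a b : A) : Prop := a ≠ b ∧ ¬ E a b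

/-- `uu O` denotes `O ∪ =`. -/
def uu (O : A → A → Prop) (a b : A) : Prop := O a b ∨ a = b

/-- `E` is the edge relation of a simple graph: symmetric and irreflexive. -/
def IsSimpleGraph (E : A → A → Prop) : Prop :=
  (∀ a b, E a b → E b a) ∧ (∀ a, ¬ E a a)

/-- An `n`-ary operation preserves an `m`-ary relation. -/
def Preserves {n m : ℕ} (f : (Fin n → A) → A) (R : Set (Fin m → A)) : Prop :=
  ∀ t : Fin n → (Fin m → A), (∀ i, t i ∈ R) → (fun j => f (fun i => t i j)) ∈ R

/-- An `n`-ary operation preserves a binary relation `S`. -/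
def PreservesRel {n : ℕ} (f : (Fin n → A) → A) (S : A → A → Prop) : Prop :=
  ∀ u v : Fin n → A, (∀ i, S (u i) (v i)) → S (f u) (f v)

/-- A binary (curried) operation preserves an `m`-ary relation. -/
def Preserves2 {m : ℕ} (f : A → A → A) (R : Set (Fin m → A)) : Prop :=
  ∀ t₁ t₂, t₁ ∈ R → t₂ ∈ R → (fun j => f (t₁ j) (t₂ j)) ∈ R

/-- A ternary (curried) operation preserves an `m`-ary relation. -/
def Preserves3 {m : ℕ} (f : A → A → A → A) (R : Set (Fin m → A)) : Prop :=
  ∀ t₁ t₂ t₃, t₁ ∈ R → t₂ ∈ R → t₃ ∈ R → (fun j => f (t₁ j) (t₂ j) (t₃ j)) ∈ R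

/-- `t` is an `OP`-tuple: `(t[1],t[2]) ∈ O` and `(t[3],t[4]) ∈ P`. -/
def IsOP (O P : A → A → Prop) (t : Fin 4 → A) : Prop := O (t 0) (t 1) ∧ P (t 2) (t 3)

/-- A quaternary relation entails a formula `ψ(x₁,x₂,x₃,x₄)`. -/
def Entails (R : Set (Fin 4 → A)) (ψ : A → A → A → A → Prop) : Prop :=
  ∀ t ∈ R, ψ (t 0) (t 1) (t 2) (t 3)

/-- `R` efficiently entails `S₁(x₁,x₂) → S₂(x₃,x₄)`. -/
def EffEntails (R : Set (Fin 4 → A)) (S₁ S₂ : A → A → Prop) : Prop :=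
  (∀ t ∈ R, S₁ (t 0) (t 1) → S₂ (t 2) (t 3)) ∧
  (∃ t ∈ R, S₁ (t 0) (t 1) ∧ S₂ (t 2) (t 3)) ∧
  (∃ t ∈ R, ¬ S₁ (t 0) (t 1) ∧ ¬ S₂ (t 2) (t 3))

/-- `f` is a quasi near-unanimity operation. -/
def IsQnu {k : ℕ} (f : (Fin k → A) → A) : Prop :=
  ∀ x y : A, ∀ j : Fin k, f (Function.update (fun _ => x) j y) = f (fun _ => x)

/-- `α` is an automorphism of the graph `(A;E)`. -/
def IsGraphAuto (E : A → A → Prop) (α : A ≃ A) : Prop := ∀ a b, E (α a) (α b) ↔ E a b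

/-- `R` is invariant under all automorphisms of `(A;E)`. -/
def AutoInvariant {m : ℕ} (E : A → A → Prop) (R : Set (Fin m → A)) : Prop :=
  ∀ α : A ≃ A, IsGraphAuto E α → ∀ t ∈ R, (fun i => α (t i)) ∈ R

/-- The extension property of the random graph. -/
def ExtensionProperty (E : A → A → Prop) : Prop :=
  ∀ U U' : Finset A, Disjoint U U' →
    ∃ v : A, (∀ u ∈ U, E v u) ∧ (∀ u ∈ U', ¬ E v u)

/-- A binary operation is injective. -/
def BinInj (f : A → A → A) : Prop := Function.Injective (fun p : A × A => f p.1 p.2)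

/-- A ternary operation is injective. -/
def TernInj (f : A → A → A → A) : Prop :=
  Function.Injective (fun p : A × A × A => f p.1 p.2.1 p.2.2)

/-- A binary injection is balanced. -/
def BalancedBin (E : A → A → Prop) (f : A → A → A) : Prop :=
  ∀ a₁ a₂ b₁ b₂ : A,
    (((E a₁ b₁ ∧ a₂ = b₂) ∨ (a₁ = b₁ ∧ E a₂ b₂)) → E (f a₁ a₂) (f b₁ b₂)) ∧
    (((NRel E a₁ b₁ ∧ a₂ = b₂) ∨ (a₁ = b₁ ∧ NRel E a₂ b₂)) → NRel E (f a₁ a₂) (f b₁ b₂))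

/-- A binary operation is `E`-dominated. -/
def EDominated (E : A → A → Prop) (f : A → A → A) : Prop :=
  ∀ a₁ a₂ b₁ b₂ : A, ((a₁ = b₁ ∧ a₂ ≠ b₂) ∨ (a₁ ≠ b₁ ∧ a₂ = b₂)) → E (f a₁ a₂) (f b₁ b₂)

/-- A binary operation is `N`-dominated. -/
def NDominated (E : A → A → Prop) (f : A → A → A) : Prop :=
  ∀ a₁ a₂ b₁ b₂ : A, ((a₁ = b₁ ∧ a₂ ≠ b₂) ∨ (a₁ ≠ b₁ ∧ a₂ = b₂)) → NRel E (f a₁ a₂) (f b₁ b₂)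

/-- A binary operation is of behaviour min. -/
def BehMin (E : A → A → Prop) (f : A → A → A) : Prop :=
  ∀ a₁ a₂ b₁ b₂ : A, a₁ ≠ b₁ → a₂ ≠ b₂ →
    (E (f a₁ a₂) (f b₁ b₂) ↔ (E a₁ b₁ ∧ E a₂ b₂))

/-- A binary operation is of behaviour max. -/
def BehMax (E : A → A → Prop) (f : A → A → A) : Prop :=
  ∀ a₁ a₂ b₁ b₂ : A, a₁ ≠ b₁ → a₂ ≠ b₂ →
    (NRel E (f a₁ a₂) (f b₁ b₂) ↔ (NRel E a₁ b₁ ∧ NRel E a₂ b₂))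

/-- A binary operation is of behaviour projection. -/
def BehProj (E : A → A → Prop) (f : A → A → A) : Prop :=
  (∀ a₁ a₂ b₁ b₂ : A, a₁ ≠ b₁ → a₂ ≠ b₂ → (E (f a₁ a₂) (f b₁ b₂) ↔ E a₁ b₁)) ∨
  (∀ a₁ a₂ b₁ b₂ : A, a₁ ≠ b₁ → a₂ ≠ b₂ → (E (f a₁ a₂) (f b₁ b₂) ↔ E a₂ b₂))

/-- A binary operation is of behaviour xor. -/
def BehXor (E : A → A → Prop) (f : A → A → A) : Prop :=
  ∀ a₁ a₂ b₁ b₂ : A, a₁ ≠ b₁ → a₂ ≠ b₂ →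
    (E (f a₁ a₂) (f b₁ b₂) ↔ Xor' (E a₁ b₁) (E a₂ b₂))

/-- A binary operation is of behaviour xnor. -/
def BehXnor (E : A → A → Prop) (f : A → A → A) : Prop :=
  ∀ a₁ a₂ b₁ b₂ : A, a₁ ≠ b₁ → a₂ ≠ b₂ →
    (E (f a₁ a₂) (f b₁ b₂) ↔ (E a₁ b₁ ↔ E a₂ b₂))

/-- A binary operation is `E`-constant: its image induces a clique. -/
def EConstantBin (E : A → A → Prop) (f : A → A → A) : Prop :=
  ∀ a₁ a₂ b₁ b₂ : A, f a₁ a₂ ≠ f b₁ b₂ → E (f a₁ a₂) (f b₁ b₂)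

/-- A binary operation is `N`-constant: its image induces an independent set. -/
def NConstantBin (E : A → A → Prop) (f : A → A → A) : Prop :=
  ∀ a₁ a₂ b₁ b₂ : A, f a₁ a₂ ≠ f b₁ b₂ → NRel E (f a₁ a₂) (f b₁ b₂)

/-- A ternary operation is of behaviour majority. -/
def BehMajority (E : A → A → Prop) (f : A → A → A → A) : Prop :=
  ∀ a₁ a₂ a₃ b₁ b₂ b₃ : A, a₁ ≠ b₁ → a₂ ≠ b₂ → a₃ ≠ b₃ →
    (E (f a₁ a₂ a₃) (f b₁ b₂ b₃) ↔
      ((E a₁ b₁ ∧ E a₂ b₂) ∨ (E a₁ b₁ ∧ E a₃ b₃) ∨ (E a₂ b₂ ∧ E a₃ b₃)))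

/-- A ternary operation is of behaviour minority. -/
def BehMinority (E : A → A → Prop) (f : A → A → A → A) : Prop :=
  ∀ a₁ a₂ a₃ b₁ b₂ b₃ : A, a₁ ≠ b₁ → a₂ ≠ b₂ → a₃ ≠ b₃ →
    (NRel E (f a₁ a₂ a₃) (f b₁ b₂ b₃) ↔
      ((NRel E a₁ b₁ ∧ NRel E a₂ b₂ ∧ NRel E a₃ b₃) ∨
       (E a₁ b₁ ∧ E a₂ b₂ ∧ NRel E a₃ b₃) ∨
       (E a₁ b₁ ∧ NRel E a₂ b₂ ∧ E a₃ b₃) ∨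
       (NRel E a₁ b₁ ∧ E a₂ b₂ ∧ E a₃ b₃)))

/-- A ternary operation hyperplanely has the binary behaviour `P`. -/
def Hyperplanely (P : (A → A → A) → Prop) (f : A → A → A → A) : Prop :=
  ∀ c : A, P (fun x y => f x y c) ∧ P (fun x y => f x c y) ∧ P (fun x y => f c x y)

/-- `n_E(u,s)`: the number of coordinates at which `u` and `s` are `E`-related. -/
noncomputable def nECount {k : ℕ} (E : A → A → Prop) (u s : Fin k → A) : ℕ :=
  {i : Fin k | E (u i) (s i)}.ncard

/-- A constant tuple. -/
def IsConstTuple {k : ℕ} (u : Fin k → A) : Prop := ∃ c, ∀ i, u i = c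

/-- `h` maps any argument containing an `N`-pair to an `N`-pair and behaves like a
minority on `{E,=}`. -/
def HMinority (E : A → A → Prop) (h : A → A → A → A) : Prop :=
  (∀ a₁ a₂ a₃ b₁ b₂ b₃ : A,
    (NRel E a₁ b₁ ∨ NRel E a₂ b₂ ∨ NRel E a₃ b₃) →
      NRel E (h a₁ a₂ a₃) (h b₁ b₂ b₃)) ∧
  (∀ a₁ a₂ a₃ b₁ b₂ b₃ : A,
    uu E a₁ b₁ → uu E a₂ b₂ → uu E a₃ b₃ →
      (E (h a₁ a₂ a₃) (h b₁ b₂ b₃) ↔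
        ((E a₁ b₁ ∧ E a₂ b₂ ∧ E a₃ b₃) ∨
         (E a₁ b₁ ∧ ¬ E a₂ b₂ ∧ ¬ E a₃ b₃) ∨
         (¬ E a₁ b₁ ∧ E a₂ b₂ ∧ ¬ E a₃ b₃) ∨
         (¬ E a₁ b₁ ∧ ¬ E a₂ b₂ ∧ E a₃ b₃))))

theorem stmt1 (E : A → A → Prop) (hG : IsSimpleGraph E)
    (g : A → A → A → A) (hginj : TernInj g)
    (hbeh : BehMajority E g ∨ BehMinority E g)
    (O P : A → A → Prop)
    (hOP : (O = E ∧ P = NRel E) ∨ (O = NRel E ∧ P = E))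
    (R : Set (Fin 4 → A)) (hpres : Preserves3 g R)
    (hPO : ∃ t ∈ R, IsOP P O t)
    (i j : Fin 4) (hij : i ≠ j)
    (hOPex : ∃ t ∈ R, IsOP O P t ∧ t i ≠ t j) :
    ∃ t' ∈ R, IsOP P O t' ∧ t' i ≠ t' j := by
  obtain ⟨s, hsR, hsP, hsO⟩ := hPO
  obtain ⟨t, htR, ⟨htO, htP⟩, htij⟩ := hOPex
  obtain ⟨hsym, hirr⟩ := hG
  have hinj : ∀ {a b c a' b' c' : A}, g a b c = g a' b' c' → a = a' ∧ b = b' ∧ c = c' := by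
    intro a b c a' b' c' h
    have := @hginj (a, b, c) (a', b', c') h
    simpa [Prod.ext_iff] using this
  have hEne : ∀ {a b : A}, E a b → a ≠ b := by
    rintro a b h rfl; exact hirr a h
  rcases hbeh with hmaj | hmin
  · -- majority: use g (t k) (s k) (s k)
    refine ⟨fun k => g (t k) (s k) (s k), hpres t s s htR hsR hsR, ⟨?_, ?_⟩, ?_⟩
    · rcases hOP with ⟨hO, hP⟩ | ⟨hO, hP⟩ <;> subst hO <;> subst hP
      · have hne : g (t 0) (s 0) (s 0) ≠ g (t 1) (s 1) (s 1) :=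
          fun h => hsP.1 (hinj h).2.1
        refine ⟨hne, fun hE => ?_⟩
        have := (hmaj _ _ _ _ _ _ (hEne htO) hsP.1 hsP.1).mp hE
        have := hsP.2
        tauto
      · exact (hmaj _ _ _ _ _ _ htO.1 (hEne hsP) (hEne hsP)).mpr
          (Or.inr (Or.inr ⟨hsP, hsP⟩))
    · rcases hOP with ⟨hO, hP⟩ | ⟨hO, hP⟩ <;> subst hO <;> subst hP
      · exact (hmaj _ _ _ _ _ _ htP.1 (hEne hsO) (hEne hsO)).mpr
          (Or.inr (Or.inr ⟨hsO, hsO⟩))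
      · have hne : g (t 2) (s 2) (s 2) ≠ g (t 3) (s 3) (s 3) :=
          fun h => hsO.1 (hinj h).2.1
        refine ⟨hne, fun hE => ?_⟩
        have := (hmaj _ _ _ _ _ _ (hEne htP) hsO.1 hsO.1).mp hE
        have := hsO.2
        tauto
    · exact fun h => htij (hinj h).1
  · -- minority: use g (s k) (t k) (t k)
    refine ⟨fun k => g (s k) (t k) (t k), hpres s t t hsR htR htR, ⟨?_, ?_⟩, ?_⟩
    · rcases hOP with ⟨hO, hP⟩ | ⟨hO, hP⟩ <;> subst hO <;> subst hP
      · exact (hmin _ _ _ _ _ _ hsP.1 (hEne htO) (hEne htO)).mpr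
          (Or.inr (Or.inr (Or.inr ⟨hsP, htO, htO⟩)))
      · have hne : g (s 0) (t 0) (t 0) ≠ g (s 1) (t 1) (t 1) :=
          fun h => hEne hsP (hinj h).1
        by_contra hE
        have := (hmin _ _ _ _ _ _ (hEne hsP) htO.1 htO.1).mp ⟨hne, hE⟩
        rcases this with ⟨h1,_,_⟩|⟨_,h2,_⟩|⟨_,_,h3⟩|⟨_,h2,_⟩
        · exact h1.2 hsP
        · exact htO.2 h2
        · exact htO.2 h3
        · exact htO.2 h2
    · rcases hOP with ⟨hO, hP⟩ | ⟨hO, hP⟩ <;> subst hO <;> subst hP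
      · have hne : g (s 2) (t 2) (t 2) ≠ g (s 3) (t 3) (t 3) :=
          fun h => hEne hsO (hinj h).1
        by_contra hE
        have := (hmin _ _ _ _ _ _ (hEne hsO) htP.1 htP.1).mp ⟨hne, hE⟩
        rcases this with ⟨h1,_,_⟩|⟨_,h2,_⟩|⟨_,_,h3⟩|⟨_,h2,_⟩
        · exact h1.2 hsO
        · exact htP.2 h2
        · exact htP.2 h3
        · exact htP.2 h2
      · exact (hmin _ _ _ _ _ _ hsO.1 (hEne htP) (hEne htP)).mpr
          (Or.inr (Or.inr (Or.inr ⟨hsO, htP, htP⟩)))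
    · exact fun h => htij (hinj h).2.1
end

section
/- Let G = (A;E) be a simple graph, g : A³ → A an injection of behaviour majority or of behaviour minority, {O₁,O₂} = {E,N}, and R ⊆ A⁴ a quaternary relation preserved by g which efficiently entails (O₁(x₁,x₂) → uuO₂(x₃,x₄)) and contains an O₁O₂-tuple and an O₂O₁-tuple. Then there is a quaternary relation R′, obtained from R by possibly swapping the first two coordinates and/or the last two coordinates, such that R′ is preserved by g, efficiently entails (O₁(x₁,x₂) → uuO₂(x₃,x₄)), and contains either (a) an O₁O₂-tuple t and an O₂O₁-tuple t′ with t[2] = t[3] and t′[2] = t′[3], or (b) an injective O₁O₂-tuple and an injective O₂O₁-tuple. -/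
universe u

variable {A : Type u}

set_option maxHeartbeats 1000000 in
theorem stmt2 (E : A → A → Prop) (hG : IsSimpleGraph E)
    (g : A → A → A → A) (hginj : TernInj g)
    (hbeh : BehMajority E g ∨ BehMinority E g)
    (O₁ O₂ : A → A → Prop)
    (hOP : (O₁ = E ∧ O₂ = NRel E) ∨ (O₁ = NRel E ∧ O₂ = E))
    (R : Set (Fin 4 → A)) (hpres : Preserves3 g R)
    (heff : EffEntails R O₁ (uu O₂))
    (h12 : ∃ t ∈ R, IsOP O₁ O₂ t) (h21 : ∃ t ∈ R, IsOP O₂ O₁ t) :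
    ∃ (π : Equiv.Perm (Fin 4)) (R' : Set (Fin 4 → A)),
      (π = 1 ∨ π = Equiv.swap 0 1 ∨ π = Equiv.swap 2 3 ∨
        π = Equiv.swap 0 1 * Equiv.swap 2 3) ∧
      R' = {t | (fun i => t (π i)) ∈ R} ∧
      Preserves3 g R' ∧
      EffEntails R' O₁ (uu O₂) ∧
      (((∃ t ∈ R', IsOP O₁ O₂ t ∧ t 1 = t 2) ∧
        (∃ t' ∈ R', IsOP O₂ O₁ t' ∧ t' 1 = t' 2)) ∨
       ((∃ t ∈ R', IsOP O₁ O₂ t ∧ Function.Injective t) ∧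
        (∃ t' ∈ R', IsOP O₂ O₁ t' ∧ Function.Injective t'))) := by
  classical
  obtain ⟨t, htR, htO⟩ := h12
  obtain ⟨t', ht'R, ht'O⟩ := h21
  have hO1 : O₁ = E ∨ O₁ = NRel E := by rcases hOP with ⟨h, _⟩ | ⟨h, _⟩ <;> simp [h]
  have hO2 : O₂ = E ∨ O₂ = NRel E := by rcases hOP with ⟨_, h⟩ | ⟨_, h⟩ <;> simp [h]
  have hsym : ∀ O : A → A → Prop, (O = E ∨ O = NRel E) → ∀ a b, O a b → O b a := by
    rintro O (rfl | rfl) a b h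
    · exact hG.1 _ _ h
    · exact ⟨h.1.symm, fun he => h.2 (hG.1 _ _ he)⟩
  have hne : ∀ O : A → A → Prop, (O = E ∨ O = NRel E) → ∀ a b, O a b → a ≠ b := by
    rintro O (rfl | rfl) a b h
    · rintro rfl; exact hG.2 _ h
    · exact h.1
  have htrans : ∀ O : A → A → Prop, (O = E ∨ O = NRel E) → ∀ a b c d : A,
      c ≠ d → (E c d ↔ E a b) → O a b → O c d := by
    rintro O (rfl | rfl) a b c d hcd hiff h
    · exact hiff.mpr h
    · exact ⟨hcd, fun he => h.2 (hiff.mp he)⟩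
  have ginj' : ∀ a b c a' b' c' : A, g a b c = g a' b' c' → a = a' ∧ b = b' ∧ c = c' := by
    intro a b c a' b' c' h
    have h' : (fun p : A × A × A => g p.1 p.2.1 p.2.2) (a, b, c)
        = (fun p : A × A × A => g p.1 p.2.1 p.2.2) (a', b', c') := h
    have := hginj h'
    simpa [Prod.ext_iff] using this
  have ht01 : t 0 ≠ t 1 := hne _ hO1 _ _ htO.1
  have ht23 : t 2 ≠ t 3 := hne _ hO2 _ _ htO.2
  have ht'01 : t' 0 ≠ t' 1 := hne _ hO2 _ _ ht'O.1
  have ht'23 : t' 2 ≠ t' 3 := hne _ hO1 _ _ ht'O.2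
  obtain ⟨u, huR, u', hu'R, hueq, hu'eq, huE, hu'E⟩ :
      ∃ u ∈ R, ∃ u' ∈ R,
        (∀ i j, u i = u j ↔ (t i = t j ∧ t' i = t' j)) ∧
        (∀ i j, u' i = u' j ↔ (t i = t j ∧ t' i = t' j)) ∧
        (∀ i j, t i ≠ t j → t' i ≠ t' j → (E (u i) (u j) ↔ E (t i) (t j))) ∧
        (∀ i j, t i ≠ t j → t' i ≠ t' j → (E (u' i) (u' j) ↔ E (t' i) (t' j))) := by
    rcases hbeh with hmaj | hmin
    · refine ⟨fun i => g (t' i) (t i) (t i), hpres _ _ _ ht'R htR htR,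
        fun i => g (t i) (t' i) (t' i), hpres _ _ _ htR ht'R ht'R, ?_, ?_, ?_, ?_⟩
      · intro i j
        constructor
        · intro h; obtain ⟨h1, h2, -⟩ := ginj' _ _ _ _ _ _ h; exact ⟨h2, h1⟩
        · rintro ⟨h1, h2⟩
          show g (t' i) (t i) (t i) = g (t' j) (t j) (t j)
          rw [h1, h2]
      · intro i j
        constructor
        · intro h; obtain ⟨h1, h2, -⟩ := ginj' _ _ _ _ _ _ h; exact ⟨h1, h2⟩
        · rintro ⟨h1, h2⟩
          show g (t i) (t' i) (t' i) = g (t j) (t' j) (t' j)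
          rw [h1, h2]
      · intro i j h h'
        show E (g (t' i) (t i) (t i)) (g (t' j) (t j) (t j)) ↔ E (t i) (t j)
        rw [hmaj _ _ _ _ _ _ h' h h]
        tauto
      · intro i j h h'
        show E (g (t i) (t' i) (t' i)) (g (t j) (t' j) (t' j)) ↔ E (t' i) (t' j)
        rw [hmaj _ _ _ _ _ _ h h' h']
        tauto
    · have hueq : ∀ i j : Fin 4,
          g (t i) (t' i) (t' i) = g (t j) (t' j) (t' j) ↔ (t i = t j ∧ t' i = t' j) := by
        intro i j
        constructor
        · intro h; obtain ⟨h1, h2, -⟩ := ginj' _ _ _ _ _ _ h; exact ⟨h1, h2⟩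
        · rintro ⟨h1, h2⟩; rw [h1, h2]
      have hu'eq : ∀ i j : Fin 4,
          g (t' i) (t i) (t i) = g (t' j) (t j) (t j) ↔ (t i = t j ∧ t' i = t' j) := by
        intro i j
        constructor
        · intro h; obtain ⟨h1, h2, -⟩ := ginj' _ _ _ _ _ _ h; exact ⟨h2, h1⟩
        · rintro ⟨h1, h2⟩
          show g (t' i) (t i) (t i) = g (t' j) (t j) (t j)
          rw [h1, h2]
      have hEiff : ∀ i j : Fin 4, t i ≠ t j → t' i ≠ t' j →
          (E (g (t i) (t' i) (t' i)) (g (t j) (t' j) (t' j)) ↔ E (t i) (t j)) := by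
        intro i j h h'
        have hn : NRel E (g (t i) (t' i) (t' i)) (g (t j) (t' j) (t' j)) ↔
            NRel E (t i) (t j) := by
          rw [hmin _ _ _ _ _ _ h h' h']
          constructor
          · rintro (⟨h1, -⟩ | ⟨-, h2, h3⟩ | ⟨-, h2, h3⟩ | ⟨h1, -⟩)
            · exact h1
            · exact absurd h2 h3.2
            · exact absurd h3 h2.2
            · exact h1
          · intro hN
            by_cases hE' : E (t' i) (t' j)
            · exact Or.inr (Or.inr (Or.inr ⟨hN, hE', hE'⟩))
            · exact Or.inl ⟨hN, ⟨h', hE'⟩, ⟨h', hE'⟩⟩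
        have hune : g (t i) (t' i) (t' i) ≠ g (t j) (t' j) (t' j) := by
          intro he; exact h ((hueq i j).mp he).1
        constructor
        · intro he
          by_contra hEt
          exact (hn.mpr ⟨h, hEt⟩).2 he
        · intro he
          by_contra hEu
          exact ((hn.mp ⟨hune, hEu⟩).2) he
      have hE'iff : ∀ i j : Fin 4, t i ≠ t j → t' i ≠ t' j →
          (E (g (t' i) (t i) (t i)) (g (t' j) (t j) (t j)) ↔ E (t' i) (t' j)) := by
        intro i j h h'
        have hn : NRel E (g (t' i) (t i) (t i)) (g (t' j) (t j) (t j)) ↔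
            NRel E (t' i) (t' j) := by
          rw [hmin _ _ _ _ _ _ h' h h]
          constructor
          · rintro (⟨h1, -⟩ | ⟨-, h2, h3⟩ | ⟨-, h2, h3⟩ | ⟨h1, -⟩)
            · exact h1
            · exact absurd h2 h3.2
            · exact absurd h3 h2.2
            · exact h1
          · intro hN
            by_cases hE : E (t i) (t j)
            · exact Or.inr (Or.inr (Or.inr ⟨hN, hE, hE⟩))
            · exact Or.inl ⟨hN, ⟨h, hE⟩, ⟨h, hE⟩⟩
        have hune : g (t' i) (t i) (t i) ≠ g (t' j) (t j) (t j) := by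
          intro he; exact h' ((hu'eq i j).mp he).2
        constructor
        · intro he
          by_contra hEt
          exact (hn.mpr ⟨h', hEt⟩).2 he
        · intro he
          by_contra hEu
          exact ((hn.mp ⟨hune, hEu⟩).2) he
      exact ⟨fun i => g (t i) (t' i) (t' i), hpres _ _ _ htR ht'R ht'R,
        fun i => g (t' i) (t i) (t i), hpres _ _ _ ht'R htR htR,
        hueq, hu'eq, hEiff, hE'iff⟩
  have hu01 : u 0 ≠ u 1 := fun h => ht01 ((hueq 0 1).mp h).1
  have hu23 : u 2 ≠ u 3 := fun h => ht23 ((hueq 2 3).mp h).1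
  have hu'01 : u' 0 ≠ u' 1 := fun h => ht01 ((hu'eq 0 1).mp h).1
  have hu'23 : u' 2 ≠ u' 3 := fun h => ht23 ((hu'eq 2 3).mp h).1
  have huO : IsOP O₁ O₂ u :=
    ⟨htrans O₁ hO1 (t 0) (t 1) (u 0) (u 1) hu01 (huE 0 1 ht01 ht'01) htO.1,
     htrans O₂ hO2 (t 2) (t 3) (u 2) (u 3) hu23 (huE 2 3 ht23 ht'23) htO.2⟩
  have hu'O : IsOP O₂ O₁ u' :=
    ⟨htrans O₂ hO2 (t' 0) (t' 1) (u' 0) (u' 1) hu'01 (hu'E 0 1 ht01 ht'01) ht'O.1,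
     htrans O₁ hO1 (t' 2) (t' 3) (u' 2) (u' 3) hu'23 (hu'E 2 3 ht23 ht'23) ht'O.2⟩
  have huusym : ∀ a b, uu O₂ a b → uu O₂ b a := by
    rintro a b (h | rfl)
    · exact Or.inl (hsym _ hO2 _ _ h)
    · exact Or.inr rfl
  have main : ∀ π : Equiv.Perm (Fin 4),
      (∀ k, π (π k) = k) →
      ((π 0 = 0 ∧ π 1 = 1) ∨ (π 0 = 1 ∧ π 1 = 0)) →
      ((π 2 = 2 ∧ π 3 = 3) ∨ (π 2 = 3 ∧ π 3 = 2)) →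
      Preserves3 g {s : Fin 4 → A | (fun i => s (π i)) ∈ R} ∧
      EffEntails {s : Fin 4 → A | (fun i => s (π i)) ∈ R} O₁ (uu O₂) ∧
      (fun i => u (π i)) ∈ {s : Fin 4 → A | (fun i => s (π i)) ∈ R} ∧
      IsOP O₁ O₂ (fun i => u (π i)) ∧
      (fun i => u' (π i)) ∈ {s : Fin 4 → A | (fun i => s (π i)) ∈ R} ∧
      IsOP O₂ O₁ (fun i => u' (π i)) := by
    intro π hinv h01 h23
    have hmemback : ∀ v : Fin 4 → A, v ∈ R →
        (fun i => v (π i)) ∈ {s : Fin 4 → A | (fun i => s (π i)) ∈ R} := by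
      intro v hv
      show (fun i => v (π (π i))) ∈ R
      have he : (fun i => v (π (π i))) = v := funext fun i => by rw [hinv]
      rw [he]; exact hv
    have hp01 : ∀ O : A → A → Prop, (O = E ∨ O = NRel E) → ∀ s : Fin 4 → A,
        (O (s (π 0)) (s (π 1)) ↔ O (s 0) (s 1)) := by
      intro O hO s
      rcases h01 with ⟨e0, e1⟩ | ⟨e0, e1⟩ <;> rw [e0, e1]
      exact ⟨hsym O hO _ _, hsym O hO _ _⟩
    have hp23 : ∀ O : A → A → Prop, (O = E ∨ O = NRel E) → ∀ s : Fin 4 → A,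
        (O (s (π 2)) (s (π 3)) ↔ O (s 2) (s 3)) := by
      intro O hO s
      rcases h23 with ⟨e2, e3⟩ | ⟨e2, e3⟩ <;> rw [e2, e3]
      exact ⟨hsym O hO _ _, hsym O hO _ _⟩
    have hpuu : ∀ s : Fin 4 → A, (uu O₂ (s (π 2)) (s (π 3)) ↔ uu O₂ (s 2) (s 3)) := by
      intro s
      rcases h23 with ⟨e2, e3⟩ | ⟨e2, e3⟩ <;> rw [e2, e3]
      exact ⟨huusym _ _, huusym _ _⟩
    refine ⟨?_, ⟨?_, ?_, ?_⟩, hmemback u huR,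
      ⟨(hp01 O₁ hO1 u).mpr huO.1, (hp23 O₂ hO2 u).mpr huO.2⟩, hmemback u' hu'R,
      ⟨(hp01 O₂ hO2 u').mpr hu'O.1, (hp23 O₁ hO1 u').mpr hu'O.2⟩⟩
    · intro t₁ t₂ t₃ h1 h2 h3
      exact hpres _ _ _ h1 h2 h3
    · intro s hs hO1s
      exact (hpuu s).mp (heff.1 _ hs ((hp01 O₁ hO1 s).mpr hO1s))
    · exact ⟨fun i => u (π i), hmemback u huR, (hp01 O₁ hO1 u).mpr huO.1,
        Or.inl ((hp23 O₂ hO2 u).mpr huO.2)⟩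
    · obtain ⟨s, hsR, hs1, hs2⟩ := heff.2.2
      exact ⟨fun i => s (π i), hmemback s hsR,
        fun hcon => hs1 ((hp01 O₁ hO1 s).mp hcon),
        fun hcon => hs2 ((hpuu s).mp hcon)⟩
  by_cases hc12 : t 1 = t 2 ∧ t' 1 = t' 2
  · obtain ⟨hP, hEff, humem, huOP, hu'mem, hu'OP⟩ :=
      main 1 (by decide) (by decide) (by decide)
    exact ⟨1, _, Or.inl rfl, rfl, hP, hEff,
      Or.inl ⟨⟨_, humem, huOP, (hueq 1 2).mpr hc12⟩,
        ⟨_, hu'mem, hu'OP, (hu'eq 1 2).mpr hc12⟩⟩⟩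
  by_cases hc13 : t 1 = t 3 ∧ t' 1 = t' 3
  · obtain ⟨hP, hEff, humem, huOP, hu'mem, hu'OP⟩ :=
      main (Equiv.swap 2 3) (by decide) (by decide) (by decide)
    have e1 : (Equiv.swap 2 3 : Equiv.Perm (Fin 4)) 1 = 1 := by decide
    have e2 : (Equiv.swap 2 3 : Equiv.Perm (Fin 4)) 2 = 3 := by decide
    refine ⟨Equiv.swap 2 3, _, Or.inr (Or.inr (Or.inl rfl)), rfl, hP, hEff,
      Or.inl ⟨⟨_, humem, huOP, ?_⟩, ⟨_, hu'mem, hu'OP, ?_⟩⟩⟩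
    · show u (Equiv.swap 2 3 1) = u (Equiv.swap 2 3 2)
      rw [e1, e2]; exact (hueq 1 3).mpr hc13
    · show u' (Equiv.swap 2 3 1) = u' (Equiv.swap 2 3 2)
      rw [e1, e2]; exact (hu'eq 1 3).mpr hc13
  by_cases hc02 : t 0 = t 2 ∧ t' 0 = t' 2
  · obtain ⟨hP, hEff, humem, huOP, hu'mem, hu'OP⟩ :=
      main (Equiv.swap 0 1) (by decide) (by decide) (by decide)
    have e1 : (Equiv.swap 0 1 : Equiv.Perm (Fin 4)) 1 = 0 := by decide
    have e2 : (Equiv.swap 0 1 : Equiv.Perm (Fin 4)) 2 = 2 := by decide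
    refine ⟨Equiv.swap 0 1, _, Or.inr (Or.inl rfl), rfl, hP, hEff,
      Or.inl ⟨⟨_, humem, huOP, ?_⟩, ⟨_, hu'mem, hu'OP, ?_⟩⟩⟩
    · show u (Equiv.swap 0 1 1) = u (Equiv.swap 0 1 2)
      rw [e1, e2]; exact (hueq 0 2).mpr hc02
    · show u' (Equiv.swap 0 1 1) = u' (Equiv.swap 0 1 2)
      rw [e1, e2]; exact (hu'eq 0 2).mpr hc02
  by_cases hc03 : t 0 = t 3 ∧ t' 0 = t' 3
  · obtain ⟨hP, hEff, humem, huOP, hu'mem, hu'OP⟩ :=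
      main (Equiv.swap 0 1 * Equiv.swap 2 3) (by decide) (by decide) (by decide)
    have e1 : (Equiv.swap 0 1 * Equiv.swap 2 3 : Equiv.Perm (Fin 4)) 1 = 0 := by decide
    have e2 : (Equiv.swap 0 1 * Equiv.swap 2 3 : Equiv.Perm (Fin 4)) 2 = 3 := by decide
    refine ⟨Equiv.swap 0 1 * Equiv.swap 2 3, _, Or.inr (Or.inr (Or.inr rfl)), rfl, hP, hEff,
      Or.inl ⟨⟨_, humem, huOP, ?_⟩, ⟨_, hu'mem, hu'OP, ?_⟩⟩⟩
    · show u ((Equiv.swap 0 1 * Equiv.swap 2 3 : Equiv.Perm (Fin 4)) 1) = u ((Equiv.swap 0 1 * Equiv.swap 2 3 : Equiv.Perm (Fin 4)) 2)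
      rw [e1, e2]; exact (hueq 0 3).mpr hc03
    · show u' ((Equiv.swap 0 1 * Equiv.swap 2 3 : Equiv.Perm (Fin 4)) 1) = u' ((Equiv.swap 0 1 * Equiv.swap 2 3 : Equiv.Perm (Fin 4)) 2)
      rw [e1, e2]; exact (hu'eq 0 3).mpr hc03
  · -- no coincidence: both tuples are injective
    have hvinj : ∀ v : Fin 4 → A,
        (∀ i j, v i = v j ↔ (t i = t j ∧ t' i = t' j)) → Function.Injective v := by
      intro v hv i j hij
      have hp := (hv i j).mp hij
      fin_cases i <;> fin_cases j <;>
        first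
          | rfl
          | exact absurd hp.1 ht01
          | exact absurd hp.1.symm ht01
          | exact absurd hp.1 ht23
          | exact absurd hp.1.symm ht23
          | exact absurd hp hc02
          | exact absurd (And.intro hp.1.symm hp.2.symm) hc02
          | exact absurd hp hc03
          | exact absurd (And.intro hp.1.symm hp.2.symm) hc03
          | exact absurd hp hc12
          | exact absurd (And.intro hp.1.symm hp.2.symm) hc12
          | exact absurd hp hc13
          | exact absurd (And.intro hp.1.symm hp.2.symm) hc13
    obtain ⟨hP, hEff, humem, huOP, hu'mem, hu'OP⟩ :=
      main 1 (by decide) (by decide) (by decide)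
    exact ⟨1, _, Or.inl rfl, rfl, hP, hEff,
      Or.inr ⟨⟨_, humem, huOP, (hvinj u hueq).comp (Equiv.injective (1 : Equiv.Perm (Fin 4)))⟩,
        ⟨_, hu'mem, hu'OP, (hvinj u' hu'eq).comp (Equiv.injective (1 : Equiv.Perm (Fin 4)))⟩⟩⟩
end

section
/- Let G = (A;E) be a countably infinite graph with the extension property, k ≥ 3, f : A^k → A a quasi near-unanimity operation which preserves E, N and ≠ (as a k-ary polymorphism), and R ⊆ A⁴ a quaternary relation preserved by f and invariant under all automorphisms of G, containing either (a) an EN-tuple t and an NE-tuple t′ with t[2] = t[3] and t′[2] = t′[3], or (b) an injective EN-tuple and an injective NE-tuple. Let m ∈ {1,…,k}. If E(f(u),f(s)) (respectively N(f(u),f(s))) holds for every {E,N}-connected constant-injective pair (u,s) of k-tuples with n_E(u,s) = m, then either N(f(u),f(s)) (respectively E(f(u),f(s))) holds for every {E,N}-connected constant-injective pair (u,s) with n_E(u,s) ∈ {k−m, k−m+1}, or R contains an EE-tuple or an NN-tuple. -/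
/-!
Let `V` be `E` or `N` and `W` the other one, so that distinct vertices are `V`- or
`W`-related. Each conclusion is read off a tuple `(f x₁, f x₂, f x₃, f x₄) ∈ R` obtained by
applying `f` to `k` rows of `R`: as `R` has no `VV`-tuple and `f` preserves `≠`, a `V`-related
pair in it forces the other pair to be `W`-related (and likewise with `V` and `W` exchanged).
The rows are copies of the given `EN`- and `NE`-tuples, built from fresh vertices with the
extension property and put into `R` by homogeneity (back and forth). A column that is constant
except at one coordinate collapses under the qnu identity; the free choice at that coordinate
adjusts the level of the resulting constant-injective pair to exactly `m`, where the hypothesis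
applies.

In case (a) one such construction relates `(c, s)` to a constant-injective pair of level `m`.
In case (b) it shows that injective pairs of level `k - m` or `k - m + 1` are `W`-related;
copying complementary rows (an `EN`-row over each `E`-coordinate, an `NE`-row over each
`N`-coordinate) then makes injective pairs of level `m` or `m - 1` `V`-related and, once more,
every pair of level `k - m` or `k - m + 1` `W`-related.
-/

universe u

variable {A : Type u}

/-- `(u,s)` is an `{E,N}`-connected constant-injective pair: `u` is constant,
`s` is injective, no entry of `s` equals the value of `u`, and every coordinate
pair is in `E ∪ N`. -/
def ENConnCI {k : ℕ} (E : A → A → Prop) (u s : Fin k → A) : Prop :=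
  IsConstTuple u ∧ Function.Injective s ∧ (∀ i j, s i ≠ u j) ∧
  (∀ i, E (u i) (s i) ∨ NRel E (u i) (s i))

namespace IsSimpleGraph

variable {E : A → A → Prop}

theorem adj_comm (hG : IsSimpleGraph E) {a b : A} : E a b ↔ E b a :=
  ⟨hG.1 a b, hG.1 b a⟩

theorem ne_of_adj (hG : IsSimpleGraph E) {a b : A} (h : E a b) : a ≠ b := by
  rintro rfl
  exact hG.2 a h

end IsSimpleGraph

namespace ExtensionProperty

variable {E : A → A → Prop}

theorem exists_fresh_vertex (hG : IsSimpleGraph E) (hext : ExtensionProperty E)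
    (D T : Finset A) (P : A → Prop) : ∃ v ∉ D, ∀ a ∈ T, E v a ↔ P a := by
  classical
  -- every vertex of `D` is adjacent to `w`, while the vertex `v` we pick is not
  obtain ⟨w, hw, -⟩ := hext (D ∪ T) ∅ (Finset.disjoint_empty_right _)
  have hwT : w ∉ T.filter P := fun h => hG.2 w (hw w (by simp_all))
  obtain ⟨v, hvP, hvnP⟩ := hext (T.filter P) (insert w (T.filter (¬ P ·)))
    (Finset.disjoint_insert_right.2 ⟨hwT, Finset.disjoint_filter_filter_not T T P⟩)
  refine ⟨v, fun hvD => hvnP w (by simp) (hG.1 _ _ (hw v (by simp [hvD]))), fun a ha => ?_⟩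
  by_cases hPa : P a
  · simpa [hPa] using hvP a (by simp [ha, hPa])
  · simpa [hPa] using hvnP a (by simp [ha, hPa])

theorem exists_fresh_tuple (hG : IsSimpleGraph E) (hext : ExtensionProperty E) :
    ∀ (n : ℕ) (D : Finset A) (T : Fin n → Finset A) (P : Fin n → A → Prop),
      ∃ v : Fin n → A, Function.Injective v ∧ (∀ i, v i ∉ D) ∧
        ∀ i, ∀ a ∈ T i, E (v i) a ↔ P i a
  | 0, _, _, _ => ⟨Fin.elim0, fun i => i.elim0, fun i => i.elim0, fun i => i.elim0⟩
  | n + 1, D, T, P => by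
    classical
    obtain ⟨v, hv_inj, hvD, hvT⟩ :=
      exists_fresh_tuple hG hext n D (T ·.castSucc) (P ·.castSucc)
    obtain ⟨b, hb, hbT⟩ := exists_fresh_vertex hG hext (D ∪ Finset.univ.image v)
      (T (Fin.last n)) (P (Fin.last n))
    simp only [Finset.mem_union, Finset.mem_image, Finset.mem_univ, true_and, not_or,
      not_exists] at hb
    refine ⟨Fin.snoc v b, ?_, Fin.lastCases (by simpa using hb.1) (by simpa using hvD),
      Fin.lastCases (by simpa using hbT) (by simpa using hvT)⟩
    rw [Fin.snoc_injective_iff]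
    exact ⟨hv_inj, fun ⟨i, hi⟩ => hb.2 i hi⟩

end ExtensionProperty

def IsPartialGraphIso (E : A → A → Prop) (s : Finset (A × A)) : Prop :=
  ∀ p ∈ s, ∀ q ∈ s, (p.1 = q.1 ↔ p.2 = q.2) ∧ (E p.1 q.1 ↔ E p.2 q.2)

namespace IsPartialGraphIso

variable [DecidableEq A] {E : A → A → Prop} {s : Finset (A × A)}

theorem image_swap (hs : IsPartialGraphIso E s) : IsPartialGraphIso E (s.image Prod.swap) := by
  intro _ hp _ hq
  obtain ⟨p, hp', rfl⟩ := Finset.mem_image.1 hp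
  obtain ⟨q, hq', rfl⟩ := Finset.mem_image.1 hq
  exact ⟨(hs p hp' q hq').1.symm, (hs p hp' q hq').2.symm⟩

theorem exists_insert_left (hG : IsSimpleGraph E) (hext : ExtensionProperty E)
    (hs : IsPartialGraphIso E s) (a : A) : ∃ b, IsPartialGraphIso E (insert (a, b) s) := by
  by_cases ha : ∃ b, (a, b) ∈ s
  · obtain ⟨b, hab⟩ := ha
    exact ⟨b, by rwa [Finset.insert_eq_of_mem hab]⟩
  push Not at ha
  obtain ⟨b, hb, hbE⟩ := hext.exists_fresh_vertex hG (s.image Prod.snd) (s.image Prod.snd)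
    (fun c => ∃ p ∈ s, p.2 = c ∧ E a p.1)
  simp only [Finset.mem_image, not_exists, not_and] at hb
  have hne : ∀ p ∈ s, a ≠ p.1 ∧ b ≠ p.2 :=
    fun p hp => ⟨fun h => ha p.2 (h ▸ hp), fun h => hb p hp h.symm⟩
  have hadj : ∀ p ∈ s, E a p.1 ↔ E b p.2 := by
    intro p hp
    rw [hbE _ (Finset.mem_image_of_mem _ hp)]
    refine ⟨fun h => ⟨p, hp, rfl, h⟩, ?_⟩
    rintro ⟨q, hq, hqp, h⟩
    rwa [← (hs q hq p hp).1.2 hqp]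
  refine ⟨b, ?_⟩
  simp only [IsPartialGraphIso, Finset.mem_insert, forall_eq_or_imp]
  refine ⟨⟨by simp [hG.2], fun q hq => ?_⟩, fun p hp => ⟨?_, fun q hq => hs p hp q hq⟩⟩
  · exact ⟨iff_of_false (hne q hq).1 (hne q hq).2, hadj q hq⟩
  · exact ⟨iff_of_false (hne p hp).1.symm (hne p hp).2.symm,
      by rw [hG.adj_comm, hadj p hp, hG.adj_comm]⟩

theorem exists_insert_right (hG : IsSimpleGraph E) (hext : ExtensionProperty E)
    (hs : IsPartialGraphIso E s) (b : A) : ∃ a, IsPartialGraphIso E (insert (a, b) s) := by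
  obtain ⟨a, ha⟩ := hs.image_swap.exists_insert_left hG hext b
  refine ⟨a, ?_⟩
  simpa [Finset.image_insert, Finset.image_image] using ha.image_swap

end IsPartialGraphIso

namespace ExtensionProperty

variable {E : A → A → Prop}

theorem exists_graphAuto_extending [Countable A] (hG : IsSimpleGraph E)
    (hext : ExtensionProperty E) {s : Finset (A × A)} (hs : IsPartialGraphIso E s) :
    ∃ α : A ≃ A, IsGraphAuto E α ∧ ∀ p ∈ s, α p.1 = p.2 := by
  classical
  have := Encodable.ofCountable A
  -- back and forth: a generic ideal of finite partial isomorphisms (Rasiowa–Sikorski lemma)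
  -- containing `s` and defined at every vertex on either side is the graph of an automorphism
  let P := {s : Finset (A × A) // IsPartialGraphIso E s}
  let atLeft (a : A) : Order.Cofinal P :=
    ⟨{f | ∃ b, (a, b) ∈ f.1}, fun f =>
      let ⟨b, hb⟩ := f.2.exists_insert_left hG hext a
      ⟨⟨_, hb⟩, ⟨b, Finset.mem_insert_self _ _⟩, Finset.subset_insert _ _⟩⟩
  let atRight (b : A) : Order.Cofinal P :=
    ⟨{f | ∃ a, (a, b) ∈ f.1}, fun f =>
      let ⟨a, ha⟩ := f.2.exists_insert_right hG hext b
      ⟨⟨_, ha⟩, ⟨a, Finset.mem_insert_self _ _⟩, Finset.subset_insert _ _⟩⟩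
  let 𝒟 : A ⊕ A → Order.Cofinal P := Sum.elim atLeft atRight
  let I := Order.idealOfCofinals ⟨s, hs⟩ 𝒟
  have hI : ∀ f ∈ I, ∀ g ∈ I, ∀ p ∈ f.1, ∀ q ∈ g.1,
      (p.1 = q.1 ↔ p.2 = q.2) ∧ (E p.1 q.1 ↔ E p.2 q.2) := by
    intro f hf g hg p hp q hq
    obtain ⟨h, -, hfh, hgh⟩ := I.directed f hf g hg
    exact h.2 p (hfh hp) q (hgh hq)
  have hleft (a : A) : ∃ b, ∃ f ∈ I, (a, b) ∈ f.1 := by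
    obtain ⟨f, ⟨b, hb⟩, hf⟩ := Order.cofinal_meets_idealOfCofinals ⟨s, hs⟩ 𝒟 (.inl a)
    exact ⟨b, f, hf, hb⟩
  have hright (b : A) : ∃ a, ∃ f ∈ I, (a, b) ∈ f.1 := by
    obtain ⟨f, ⟨a, ha⟩, hf⟩ := Order.cofinal_meets_idealOfCofinals ⟨s, hs⟩ 𝒟 (.inr b)
    exact ⟨a, f, hf, ha⟩
  choose F f hf hfF using hleft
  choose G g hg hgG using hright
  refine ⟨⟨F, G, fun a => ?_, fun b => ?_⟩, fun a b => ?_, fun p hp => ?_⟩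
  · exact ((hI _ (hg _) _ (hf a) _ (hgG (F a)) _ (hfF a)).1.2 rfl)
  · exact ((hI _ (hf _) _ (hg b) _ (hfF (G b)) _ (hgG b)).1.1 rfl)
  · exact (hI _ (hf a) _ (hf b) _ (hfF a) _ (hfF b)).2.symm
  · exact (hI _ (hf p.1) _ (Order.mem_idealOfCofinals ⟨s, hs⟩ 𝒟) _ (hfF p.1) _ hp).1.1 rfl

end ExtensionProperty

namespace AutoInvariant

variable {E : A → A → Prop}

theorem mem_of_isomorphic [Countable A] {n : ℕ} {R : Set (Fin n → A)} (hG : IsSimpleGraph E)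
    (hext : ExtensionProperty E) (hinv : AutoInvariant E R) {t u : Fin n → A} (ht : t ∈ R)
    (htu : ∀ i j, i < j → (t i = t j ↔ u i = u j) ∧ (E (t i) (t j) ↔ E (u i) (u j))) :
    u ∈ R := by
  classical
  have htu' : ∀ i j, (t i = t j ↔ u i = u j) ∧ (E (t i) (t j) ↔ E (u i) (u j)) := by
    intro i j
    rcases lt_trichotomy i j with hij | rfl | hij
    · exact htu i j hij
    · simp [hG.2]
    · rw [eq_comm, eq_comm (a := u i), hG.adj_comm, hG.adj_comm (a := u i)]
      exact htu j i hij
  obtain ⟨α, hα, htα⟩ := hext.exists_graphAuto_extending hG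
    (s := Finset.univ.image fun i => (t i, u i)) (by simpa [IsPartialGraphIso] using htu')
  convert hinv α hα t ht using 1
  funext i
  exact (htα _ (Finset.mem_image_of_mem _ (Finset.mem_univ i))).symm

theorem mem_of_injective [Countable A] {R : Set (Fin 4 → A)} (hG : IsSimpleGraph E)
    (hext : ExtensionProperty E) (hinv : AutoInvariant E R) {t : Fin 4 → A} (ht : t ∈ R)
    (ht_inj : Function.Injective t)
    {a b c d : A} (hba : b ≠ a) (hca : c ≠ a) (hcb : c ≠ b) (hda : d ≠ a) (hdb : d ≠ b)
    (hdc : d ≠ c) (hEba : E b a ↔ E (t 1) (t 0)) (hEca : E c a ↔ E (t 2) (t 0))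
    (hEcb : E c b ↔ E (t 2) (t 1)) (hEda : E d a ↔ E (t 3) (t 0))
    (hEdb : E d b ↔ E (t 3) (t 1)) (hEdc : E d c ↔ E (t 3) (t 2)) :
    ![a, b, c, d] ∈ R := by
  refine hinv.mem_of_isomorphic hG hext ht fun i j hij => ?_
  rw [hG.adj_comm, hG.adj_comm (a := ![a, b, c, d] i), ht_inj.eq_iff]
  fin_cases i <;> fin_cases j <;> simp_all [eq_comm]

theorem mem_of_one_eq_two [Countable A] {R : Set (Fin 4 → A)} (hG : IsSimpleGraph E)
    (hext : ExtensionProperty E) (hinv : AutoInvariant E R) {t : Fin 4 → A} (ht : t ∈ R)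
    (ht12 : t 1 = t 2)
    (ht01 : t 0 ≠ t 1) (ht03 : t 0 ≠ t 3) (ht13 : t 1 ≠ t 3) {a b c : A}
    (hab : a ≠ b) (hac : a ≠ c) (hbc : b ≠ c)
    (hEab : E a b ↔ E (t 0) (t 1)) (hEac : E a c ↔ E (t 0) (t 3))
    (hEbc : E b c ↔ E (t 1) (t 3)) :
    ![a, b, b, c] ∈ R := by
  refine hinv.mem_of_isomorphic hG hext ht fun i j hij => ?_
  fin_cases i <;> fin_cases j <;> simp_all [hG.2]

end AutoInvariant

theorem ncard_not_add_ncard {k : ℕ} (P : Fin k → Prop) :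
    {i | ¬ P i}.ncard + {i | P i}.ncard = k := by
  rw [add_comm, ← Set.compl_ofPred, Set.ncard_add_ncard_compl, Nat.card_eq_fintype_card,
    Fintype.card_fin]

theorem exists_ncard_eq_agreeing_off_point {k m : ℕ} (hm1 : 1 ≤ m) (hmk : m ≤ k)
    (N : Set (Fin k)) (hN : N.ncard = m ∨ N.ncard + 1 = m) :
    ∃ j, ∃ M : Set (Fin k), M.ncard = m ∧ ∀ i ≠ j, (i ∈ M ↔ i ∈ N) := by
  rcases hN with hN | hN
  · exact ⟨⟨0, by omega⟩, N, hN, fun _ _ => Iff.rfl⟩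
  · obtain ⟨j, hj⟩ : ∃ j, j ∉ N := by
      by_contra! h
      rw [Set.eq_univ_of_forall h, Set.ncard_univ, Nat.card_eq_fintype_card,
        Fintype.card_fin] at hN
      omega
    refine ⟨j, insert j N, by rw [Set.ncard_insert_of_notMem hj, hN], fun i hij => ?_⟩
    simp [hij]

section Operations

variable {k : ℕ} {f : (Fin k → A) → A} {E V : A → A → Prop} {m : ℕ}

theorem Preserves.vec_mem {R : Set (Fin 4 → A)} (hpres : Preserves f R) {a b c d : Fin k → A}
    (h : ∀ i, ![a i, b i, c i, d i] ∈ R) : ![f a, f b, f c, f d] ∈ R := by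
  convert hpres _ h using 1
  funext q
  fin_cases q <;> rfl

theorem IsQnu.apply_ite (hqnu : IsQnu f) (j : Fin k) (x y : A) :
    f (fun i => if i = j then y else x) = f (fun _ => x) := by
  rw [← hqnu x y j]
  congr 1
  funext i
  rw [Function.update_apply]

theorem enConnCI_const {c : A} {v : Fin k → A} (hv : Function.Injective v)
    (hvc : ∀ i, v i ≠ c) : ENConnCI E (fun _ => c) v :=
  ⟨⟨c, fun _ => rfl⟩, hv, fun i _ => hvc i,
    fun i => or_iff_not_imp_left.2 fun h => ⟨(hvc i).symm, h⟩⟩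

theorem exists_ncard_eq_of_nECount (hm1 : 1 ≤ m) (hmk : m ≤ k)
    {x y : Fin k → A} (h : nECount E x y = k - m ∨ nECount E x y = k - m + 1) :
    ∃ j, ∃ M : Set (Fin k), M.ncard = m ∧ ∀ i ≠ j, (i ∈ M ↔ ¬ E (x i) (y i)) := by
  have := ncard_not_add_ncard fun i => E (x i) (y i)
  unfold nECount at h
  exact exists_ncard_eq_agreeing_off_point hm1 hmk {i | ¬ E (x i) (y i)} (by omega)

theorem rel_const_of_ncard_eq
    (hH : ∀ u s : Fin k → A, ENConnCI E u s → nECount E u s = m → V (f u) (f s))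
    {c : A} {v : Fin k → A} (hv : Function.Injective v) (hvc : ∀ i, v i ≠ c)
    {M : Set (Fin k)} (hcv : ∀ i, E c (v i) ↔ i ∈ M) (hM : M.ncard = m) :
    V (f fun _ => c) (f v) := by
  refine hH _ _ (enConnCI_const hv hvc) ?_
  rw [← hM, nECount]
  simp only [hcv, Set.ofPred_mem_eq]

end Operations

def IsInjDisjoint {k : ℕ} (p w : Fin k → A) : Prop :=
  Function.Injective p ∧ Function.Injective w ∧ ∀ i j, p i ≠ w j

theorem ExtensionProperty.exists_fresh_tuple_of_isInjDisjoint {E : A → A → Prop}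
    (hG : IsSimpleGraph E) (hext : ExtensionProperty E) {k : ℕ} {y z : Fin k → A}
    (hyz : IsInjDisjoint y z) (n : ℕ) (P Q : Fin k → Prop) :
    ∃ δ : Fin n → A, Function.Injective δ ∧ (∀ a i, δ a ≠ y i ∧ δ a ≠ z i) ∧
      ∀ a i, (E (δ a) (y i) ↔ P i) ∧ (E (δ a) (z i) ↔ Q i) := by
  classical
  obtain ⟨hy, hz, hyz⟩ := hyz
  let D := Finset.univ.image y ∪ Finset.univ.image z
  obtain ⟨δ, hδ_inj, hδD, hδE⟩ := hext.exists_fresh_tuple hG n D (fun _ => D)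
    fun _ a => ∃ i, (a = y i ∧ P i) ∨ (a = z i ∧ Q i)
  simp only [D, Finset.mem_union, Finset.mem_image, Finset.mem_univ, true_and, not_or,
    not_exists] at hδD hδE
  refine ⟨δ, hδ_inj, fun a i => ⟨(hδD a).1 i ∘ Eq.symm, (hδD a).2 i ∘ Eq.symm⟩,
    fun a i => ⟨?_, ?_⟩⟩
  · simpa [hy.eq_iff, fun i' => hyz i i'] using hδE a (y i) (.inl ⟨i, rfl⟩)
  · simpa [hz.eq_iff, fun i' => (hyz i' i).symm] using hδE a (z i) (.inr ⟨i, rfl⟩)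

/-- Case (b) of the hypothesis on `R`. -/
def HasInjMixedTuples (E : A → A → Prop) (R : Set (Fin 4 → A)) : Prop :=
  (∃ t ∈ R, IsOP E (NRel E) t ∧ Function.Injective t) ∧
    (∃ t ∈ R, IsOP (NRel E) E t ∧ Function.Injective t)

theorem HasInjMixedTuples.exists_template {E : A → A → Prop} {R : Set (Fin 4 → A)}
    (hG : IsSimpleGraph E) (hR : HasInjMixedTuples E R) (a b : A) :
    ∃ τ ∈ R, Function.Injective τ ∧ (E (τ 0) (τ 1) ↔ E a b) ∧
      (E (τ 3) (τ 2) ↔ ¬ E a b) := by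
  obtain ⟨⟨t, ht, htEN, ht_inj⟩, ⟨t', ht', ht'NE, ht'_inj⟩⟩ := hR
  by_cases h : E a b
  · exact ⟨t, ht, ht_inj, iff_of_true htEN.1 h, iff_of_false (htEN.2.2 ∘ hG.1 _ _) (· h)⟩
  · exact ⟨t', ht', ht'_inj, iff_of_false ht'NE.1.2 h, iff_of_true (hG.1 _ _ ht'NE.2) h⟩

theorem exists_complementary_rows [Countable A] {E : A → A → Prop} {R : Set (Fin 4 → A)}
    (hG : IsSimpleGraph E) (hext : ExtensionProperty E) (hinv : AutoInvariant E R)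
    (hR : HasInjMixedTuples E R) {k : ℕ} (x y : Fin k → A) (hxy : ∀ i, x i ≠ y i) :
    ∃ p w : Fin k → A, IsInjDisjoint p w ∧ (∀ i, E (p i) (w i) ↔ ¬ E (x i) (y i)) ∧
      ∀ i, ![x i, y i, p i, w i] ∈ R := by
  classical
  choose τ hτR hτ_inj hτ01 hτ32 using fun i => hR.exists_template hG (x i) (y i)
  let D := Finset.univ.image x ∪ Finset.univ.image y
  obtain ⟨p, hp_inj, hpD, hpE⟩ := hext.exists_fresh_tuple hG k D (fun i => {x i, y i})
    fun i a => if a = x i then E (τ i 2) (τ i 0) else E (τ i 2) (τ i 1)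
  obtain ⟨w, hw_inj, hwD, hwE⟩ := hext.exists_fresh_tuple hG k (D ∪ Finset.univ.image p)
    (fun i => {x i, y i, p i})
    fun i a => if a = x i then E (τ i 3) (τ i 0) else if a = y i then E (τ i 3) (τ i 1)
      else E (τ i 3) (τ i 2)
  simp only [D, Finset.mem_union, Finset.mem_image, Finset.mem_univ, true_and, not_or,
    not_exists] at hpD hwD
  have hpx i : p i ≠ x i := (hpD i).1 i ∘ Eq.symm
  have hpy i : p i ≠ y i := (hpD i).2 i ∘ Eq.symm
  have hwx i : w i ≠ x i := (hwD i).1.1 i ∘ Eq.symm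
  have hwy i : w i ≠ y i := (hwD i).1.2 i ∘ Eq.symm
  have hwp i j : p i ≠ w j := (hwD j).2 i
  refine ⟨p, w, ⟨hp_inj, hw_inj, hwp⟩, fun i => ?_, fun i => ?_⟩
  · rw [hG.adj_comm, hwE i (p i) (by simp), if_neg (hpx i), if_neg (hpy i), hτ32]
  · refine hinv.mem_of_injective hG hext (hτR i) (hτ_inj i) (hxy i).symm (hpx i) (hpy i)
      (hwx i) (hwy i) (hwp i i).symm ?_ ?_ ?_ ?_ ?_ ?_
    · rw [hG.adj_comm, hG.adj_comm (a := τ i 1), hτ01 i]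
    · simpa using hpE i (x i) (by simp)
    · simpa [(hxy i).symm] using hpE i (y i) (by simp)
    · simpa using hwE i (x i) (by simp)
    · simpa [(hxy i).symm] using hwE i (y i) (by simp)
    · simpa [hpx i, hpy i] using hwE i (p i) (by simp)

theorem exists_rows_const_column [Countable A] {E : A → A → Prop} {R : Set (Fin 4 → A)}
    (hG : IsSimpleGraph E) (hext : ExtensionProperty E) (hinv : AutoInvariant E R)
    (hR : HasInjMixedTuples E R) {k : ℕ} {y z : Fin k → A} (hyz : IsInjDisjoint y z)
    (j : Fin k) (M : Set (Fin k)) (hM : ∀ i ≠ j, (i ∈ M ↔ ¬ E (y i) (z i))) :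
    ∃ d d' : A, ∃ v : Fin k → A, Function.Injective v ∧ (∀ i, v i ≠ d) ∧
      (∀ i, E d (v i) ↔ i ∈ M) ∧
      ∀ i, ![y i, z i, if i = j then d' else d, v i] ∈ R := by
  classical
  choose τ hτR hτ_inj hτ01 hτ32 using fun i => hR.exists_template hG (y i) (z i)
  -- `δ 0` is the constant column and `δ 1` its deviation at `j`; both realise every template
  obtain ⟨δ, hδ_inj, hδyz, hδE⟩ := hext.exists_fresh_tuple_of_isInjDisjoint hG hyz 2
    (fun i => E (τ i 2) (τ i 0)) (fun i => E (τ i 2) (τ i 1))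
  obtain ⟨-, -, hyz⟩ := hyz
  obtain ⟨v, hv_inj, hvD, hvE⟩ := hext.exists_fresh_tuple hG k
    (Finset.univ.image y ∪ Finset.univ.image z ∪ {δ 0, δ 1}) (fun i => {y i, z i, δ 0, δ 1})
    fun i a => if a = y i then E (τ i 3) (τ i 0) else if a = z i then E (τ i 3) (τ i 1)
      else if a = δ 0 then i ∈ M else E (τ i 3) (τ i 2)
  simp only [Finset.mem_union, Finset.mem_image, Finset.mem_univ, true_and, not_or,
    not_exists, Finset.mem_insert, Finset.mem_singleton] at hvD
  have hδy a i : δ a ≠ y i := (hδyz a i).1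
  have hδz a i : δ a ≠ z i := (hδyz a i).2
  have hδ01 : δ 0 ≠ δ 1 := hδ_inj.ne (by decide)
  have hvy i : v i ≠ y i := (hvD i).1.1 i ∘ Eq.symm
  have hvz i : v i ≠ z i := (hvD i).1.2 i ∘ Eq.symm
  refine ⟨δ 0, δ 1, v, hv_inj, fun i => (hvD i).2.1, fun i => ?_, fun i => ?_⟩
  · rw [hG.adj_comm]
    simpa [hδy 0 i, hδz 0 i] using hvE i (δ 0) (by simp)
  · rw [← apply_ite δ]
    refine hinv.mem_of_injective hG hext (hτR i) (hτ_inj i) (hyz i i).symm (hδy _ i) (hδz _ i)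
      (hvy i) (hvz i) ?_ ?_ (hδE _ i).1 (hδE _ i).2 ?_ ?_ ?_
    · split_ifs <;> simp [(hvD i).2.1, (hvD i).2.2]
    · rw [hG.adj_comm, hG.adj_comm (a := τ i 1), hτ01 i]
    · simpa using hvE i (y i) (by simp)
    · simpa [hyz i i |>.symm] using hvE i (z i) (by simp)
    · split_ifs with hij
      · simpa [hδy 1 i, hδz 1 i, hδ01.symm] using hvE i (δ 1) (by simp)
      · simpa [hδy 0 i, hδz 0 i, hM i hij, hτ32 i] using hvE i (δ 0) (by simp)

/-- Case (a) of the hypothesis on `R`. -/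
def HasMidEqMixedTuples (E : A → A → Prop) (R : Set (Fin 4 → A)) : Prop :=
  (∃ t ∈ R, IsOP E (NRel E) t ∧ t 1 = t 2) ∧ (∃ t ∈ R, IsOP (NRel E) E t ∧ t 1 = t 2)

theorem HasMidEqMixedTuples.exists_template {E : A → A → Prop} {R : Set (Fin 4 → A)}
    (hG : IsSimpleGraph E) (hR : HasMidEqMixedTuples E R) (P : Prop) :
    ∃ τ ∈ R, τ 1 = τ 2 ∧ τ 0 ≠ τ 1 ∧ τ 0 ≠ τ 3 ∧ τ 1 ≠ τ 3 ∧
      (E (τ 0) (τ 1) ↔ ¬ P) ∧ (E (τ 1) (τ 3) ↔ P) := by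
  obtain ⟨⟨t, ht, ⟨ht01, ht23⟩, ht12⟩, ⟨t', ht', ⟨ht'01, ht'23⟩, ht'12⟩⟩ := hR
  rw [← ht12] at ht23
  rw [← ht'12] at ht'23
  by_cases hP : P
  · refine ⟨t', ht', ht'12, ht'01.1, fun h => ?_, hG.ne_of_adj ht'23,
      iff_of_false ht'01.2 (· hP), iff_of_true ht'23 hP⟩
    exact ht'01.2 (hG.1 _ _ (h ▸ ht'23))
  · refine ⟨t, ht, ht12, hG.ne_of_adj ht01, fun h => ?_, ht23.1, iff_of_true ht01 hP,
      iff_of_false ht23.2 hP⟩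
    exact ht23.2 (hG.1 _ _ (h ▸ ht01))

theorem exists_rows_midEq [Countable A] {E : A → A → Prop} {R : Set (Fin 4 → A)}
    (hG : IsSimpleGraph E) (hext : ExtensionProperty E) (hinv : AutoInvariant E R)
    (hR : HasMidEqMixedTuples E R) {k : ℕ} {c : A} {s : Fin k → A} (hsc : ∀ i, s i ≠ c)
    (j : Fin k) (M : Set (Fin k)) (hM : ∀ i ≠ j, (i ∈ M ↔ ¬ E c (s i))) :
    ∃ p : Fin k → A, ∃ e : A, Function.Injective p ∧ (∀ i, p i ≠ c) ∧
      (∀ i, E c (p i) ↔ i ∈ M) ∧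
      ∀ i, ![p i, if i = j then e else c, if i = j then e else c, s i] ∈ R := by
  classical
  choose τ hτR hτ12 hτ01 hτ03 hτ13 hEτ01 hEτ13 using
    fun i => hR.exists_template hG (i ≠ j ∧ E c (s i))
  obtain ⟨p, hp_inj, hpD, hpE⟩ := hext.exists_fresh_tuple hG k (insert c (Finset.univ.image s))
    (fun i => {c, s i}) fun i a => if a = c then i ∈ M else E (τ i 0) (τ i 3)
  obtain ⟨e, heD, heE⟩ := hext.exists_fresh_vertex hG {c, s j, p j} {p j, s j} (· = p j)
  simp only [Finset.mem_insert, Finset.mem_image, Finset.mem_univ, true_and, not_or,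
    not_exists, Finset.mem_singleton] at hpD heD
  have hps i : p i ≠ s i := (hpD i).2 i ∘ Eq.symm
  have hpEs i : E (p i) (s i) ↔ E (τ i 0) (τ i 3) := by
    simpa [hsc i] using hpE i (s i) (by simp)
  have hpEc i : E (p i) c ↔ i ∈ M := by simpa using hpE i c (by simp)
  refine ⟨p, e, hp_inj, fun i => (hpD i).1, fun i => hG.adj_comm.trans (hpEc i), fun i => ?_⟩
  split_ifs with hij
  · subst hij
    refine hinv.mem_of_one_eq_two hG hext (hτR i) (hτ12 i) (hτ01 i) (hτ03 i) (hτ13 i)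
      (Ne.symm heD.2.2) (hps i) (heD.2.1) ?_ (hpEs i) ?_
    · rw [hG.adj_comm, heE (p i) (by simp), hEτ01]
      simp
    · rw [heE (s i) (by simp), hEτ13]
      simp [(hps i).symm]
  · refine hinv.mem_of_one_eq_two hG hext (hτR i) (hτ12 i) (hτ01 i) (hτ03 i) (hτ13 i)
      (hpD i).1 (hps i) (hsc i).symm ?_ (hpEs i) ?_
    · rw [hpEc, hEτ01, hM i hij]
      simp [hij]
    · simp [hEτ13, hij]

section Relations

variable [Countable A] {E : A → A → Prop} {R : Set (Fin 4 → A)} {k : ℕ}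
  {f : (Fin k → A) → A} {V W : A → A → Prop} {m : ℕ}

theorem rel_of_forall_complementary (hG : IsSimpleGraph E) (hext : ExtensionProperty E)
    (hinv : AutoInvariant E R) (hR : HasInjMixedTuples E R) (hpres : Preserves f R)
    (hfNe : PreservesRel f (fun a b => a ≠ b)) (hVW : ∀ a b, a ≠ b → V a b ∨ W a b)
    (hnoVV : ¬ ∃ u ∈ R, IsOP V V u) {x y : Fin k → A} (hxy : ∀ i, x i ≠ y i)
    (hV : ∀ p w, IsInjDisjoint p w → nECount E p w + nECount E x y = k → V (f p) (f w)) :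
    W (f x) (f y) := by
  obtain ⟨p, w, hpw, hE, hrows⟩ := exists_complementary_rows hG hext hinv hR x y hxy
  have hlev : nECount E p w + nECount E x y = k := by
    simp only [nECount, hE]
    exact ncard_not_add_ncard _
  exact (hVW _ _ (hfNe x y hxy)).resolve_left
    fun h => hnoVV ⟨_, hpres.vec_mem hrows, h, hV p w hpw hlev⟩

theorem rel_of_injDisjoint (hG : IsSimpleGraph E) (hext : ExtensionProperty E)
    (hinv : AutoInvariant E R) (hR : HasInjMixedTuples E R) (hpres : Preserves f R)
    (hqnu : IsQnu f) (hfNe : PreservesRel f (fun a b => a ≠ b))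
    (hVW : ∀ a b, a ≠ b → V a b ∨ W a b) (hnoVV : ¬ ∃ u ∈ R, IsOP V V u)
    (hm1 : 1 ≤ m) (hmk : m ≤ k)
    (hH : ∀ u s : Fin k → A, ENConnCI E u s → nECount E u s = m → V (f u) (f s))
    {y z : Fin k → A} (hyz : IsInjDisjoint y z)
    (hlev : nECount E y z = k - m ∨ nECount E y z = k - m + 1) : W (f y) (f z) := by
  obtain ⟨j, M, hMm, hM⟩ := exists_ncard_eq_of_nECount hm1 hmk hlev
  obtain ⟨d, d', v, hv_inj, hvd, hdv, hrows⟩ :=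
    exists_rows_const_column hG hext hinv hR hyz j M hM
  have hψ := hpres.vec_mem hrows
  rw [hqnu.apply_ite] at hψ
  have hV := rel_const_of_ncard_eq hH hv_inj hvd hdv hMm
  exact (hVW _ _ (hfNe y z fun i => hyz.2.2 i i)).resolve_left fun h => hnoVV ⟨_, hψ, h, hV⟩

theorem rel_of_hasInjMixedTuples (hG : IsSimpleGraph E) (hext : ExtensionProperty E)
    (hinv : AutoInvariant E R) (hR : HasInjMixedTuples E R) (hpres : Preserves f R)
    (hqnu : IsQnu f) (hfNe : PreservesRel f (fun a b => a ≠ b))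
    (hVW : ∀ a b, a ≠ b → V a b ∨ W a b) (hnoVV : ¬ ∃ u ∈ R, IsOP V V u)
    (hnoWW : ¬ ∃ u ∈ R, IsOP W W u) (hm1 : 1 ≤ m) (hmk : m ≤ k)
    (hH : ∀ u s : Fin k → A, ENConnCI E u s → nECount E u s = m → V (f u) (f s))
    {x y : Fin k → A} (hxy : ∀ i, x i ≠ y i)
    (hlev : nECount E x y = k - m ∨ nECount E x y = k - m + 1) : W (f x) (f y) := by
  have hWV : ∀ a b, a ≠ b → W a b ∨ V a b := fun a b h => (hVW a b h).symm
  have hV : ∀ p w, IsInjDisjoint p w → nECount E p w + nECount E x y = k → V (f p) (f w) := by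
    refine fun p w hpw hsum => rel_of_forall_complementary hG hext hinv hR hpres hfNe hWV hnoWW
      (fun i => hpw.2.2 i i) fun p' w' hpw' hsum' => ?_
    exact rel_of_injDisjoint hG hext hinv hR hpres hqnu hfNe hVW hnoVV hm1 hmk hH hpw' (by omega)
  exact rel_of_forall_complementary hG hext hinv hR hpres hfNe hVW hnoVV hxy hV

theorem rel_of_hasMidEqMixedTuples (hG : IsSimpleGraph E) (hext : ExtensionProperty E)
    (hinv : AutoInvariant E R) (hR : HasMidEqMixedTuples E R) (hpres : Preserves f R)
    (hqnu : IsQnu f) (hfNe : PreservesRel f (fun a b => a ≠ b))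
    (hVW : ∀ a b, a ≠ b → V a b ∨ W a b) (hV : ∀ a b, V a b → V b a)
    (hnoVV : ¬ ∃ u ∈ R, IsOP V V u) (hm1 : 1 ≤ m) (hmk : m ≤ k)
    (hH : ∀ u s : Fin k → A, ENConnCI E u s → nECount E u s = m → V (f u) (f s))
    {c : A} {s : Fin k → A} (hsc : ∀ i, s i ≠ c)
    (hlev : nECount E (fun _ => c) s = k - m ∨ nECount E (fun _ => c) s = k - m + 1) :
    W (f fun _ => c) (f s) := by
  obtain ⟨j, M, hMm, hM⟩ := exists_ncard_eq_of_nECount hm1 hmk hlev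
  obtain ⟨p, e, hp_inj, hpc, hcp, hrows⟩ := exists_rows_midEq hG hext hinv hR hsc j M hM
  have hψ := hpres.vec_mem hrows
  rw [hqnu.apply_ite] at hψ
  have hcp' := rel_const_of_ncard_eq hH hp_inj hpc hcp hMm
  exact (hVW _ _ (hfNe _ _ fun i => (hsc i).symm)).resolve_left
    fun h => hnoVV ⟨_, hψ, hV _ _ hcp', h⟩

theorem rel_of_enConnCI (hG : IsSimpleGraph E) (hext : ExtensionProperty E)
    (hinv : AutoInvariant E R) (hR : HasMidEqMixedTuples E R ∨ HasInjMixedTuples E R)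
    (hpres : Preserves f R) (hqnu : IsQnu f) (hfNe : PreservesRel f (fun a b => a ≠ b))
    (hVW : ∀ a b, a ≠ b → V a b ∨ W a b) (hV : ∀ a b, V a b → V b a)
    (hnoVV : ¬ ∃ u ∈ R, IsOP V V u) (hnoWW : ¬ ∃ u ∈ R, IsOP W W u)
    (hm1 : 1 ≤ m) (hmk : m ≤ k)
    (hH : ∀ u s : Fin k → A, ENConnCI E u s → nECount E u s = m → V (f u) (f s))
    {u s : Fin k → A} (hus : ENConnCI E u s)
    (hlev : nECount E u s = k - m ∨ nECount E u s = k - m + 1) : W (f u) (f s) := by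
  obtain ⟨⟨c, hc⟩, -, hsu, -⟩ := hus
  obtain rfl : u = fun _ => c := funext hc
  rcases hR with hR | hR
  · exact rel_of_hasMidEqMixedTuples hG hext hinv hR hpres hqnu hfNe hVW hV hnoVV hm1 hmk hH
      (fun i => hsu i i) hlev
  · exact rel_of_hasInjMixedTuples hG hext hinv hR hpres hqnu hfNe hVW hnoVV hnoWW hm1 hmk hH
      (fun i => (hsu i i).symm) hlev

end Relations

theorem stmt3_general {k : ℕ} (E : A → A → Prop) (hG : IsSimpleGraph E)
    [Countable A] (hext : ExtensionProperty E)
    (f : (Fin k → A) → A) (hqnu : IsQnu f)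
    (hfNe : PreservesRel f (fun a b => a ≠ b))
    (R : Set (Fin 4 → A)) (hpres : Preserves f R) (hinv : AutoInvariant E R)
    (hR : ((∃ t ∈ R, IsOP E (NRel E) t ∧ t 1 = t 2) ∧
           (∃ t' ∈ R, IsOP (NRel E) E t' ∧ t' 1 = t' 2)) ∨
          ((∃ t ∈ R, IsOP E (NRel E) t ∧ Function.Injective t) ∧
           (∃ t' ∈ R, IsOP (NRel E) E t' ∧ Function.Injective t')))
    (m : ℕ) (hm1 : 1 ≤ m) (hmk : m ≤ k) :
    ((∀ u s : Fin k → A, ENConnCI E u s → nECount E u s = m → E (f u) (f s)) →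
      ((∀ u s : Fin k → A, ENConnCI E u s →
          (nECount E u s = k - m ∨ nECount E u s = k - m + 1) →
          NRel E (f u) (f s)) ∨
       (∃ t ∈ R, IsOP E E t) ∨ (∃ t ∈ R, IsOP (NRel E) (NRel E) t))) ∧
    ((∀ u s : Fin k → A, ENConnCI E u s → nECount E u s = m → NRel E (f u) (f s)) →
      ((∀ u s : Fin k → A, ENConnCI E u s →
          (nECount E u s = k - m ∨ nECount E u s = k - m + 1) →
          E (f u) (f s)) ∨
       (∃ t ∈ R, IsOP E E t) ∨ (∃ t ∈ R, IsOP (NRel E) (NRel E) t))) := by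
  have hEN : ∀ a b, a ≠ b → E a b ∨ NRel E a b :=
    fun a b hab => or_iff_not_imp_left.2 (⟨hab, ·⟩)
  have hNE : ∀ a b, a ≠ b → NRel E a b ∨ E a b := fun a b hab => (hEN a b hab).symm
  have hNsymm : ∀ a b, NRel E a b → NRel E b a := fun a b h => ⟨h.1.symm, h.2 ∘ hG.1 b a⟩
  refine ⟨fun hH => or_iff_not_imp_right.2 fun h u s hus => ?_,
    fun hH => or_iff_not_imp_right.2 fun h u s hus => ?_⟩
  · exact rel_of_enConnCI hG hext hinv hR hpres hqnu hfNe hEN hG.1 (h <| .inl ·) (h <| .inr ·)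
      hm1 hmk hH hus
  · exact rel_of_enConnCI hG hext hinv hR hpres hqnu hfNe hNE hNsymm (h <| .inr ·) (h <| .inl ·)
      hm1 hmk hH hus

theorem stmt3 {k : ℕ} (E : A → A → Prop) (hG : IsSimpleGraph E)
    [Countable A] [Infinite A] (hext : ExtensionProperty E)
    (hk : 3 ≤ k)
    (f : (Fin k → A) → A) (hqnu : IsQnu f)
    (hfE : PreservesRel f E) (hfN : PreservesRel f (NRel E))
    (hfNe : PreservesRel f (fun a b => a ≠ b))
    (R : Set (Fin 4 → A)) (hpres : Preserves f R) (hinv : AutoInvariant E R)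
    (hR : ((∃ t ∈ R, IsOP E (NRel E) t ∧ t 1 = t 2) ∧
           (∃ t' ∈ R, IsOP (NRel E) E t' ∧ t' 1 = t' 2)) ∨
          ((∃ t ∈ R, IsOP E (NRel E) t ∧ Function.Injective t) ∧
           (∃ t' ∈ R, IsOP (NRel E) E t' ∧ Function.Injective t')))
    (m : ℕ) (hm1 : 1 ≤ m) (hmk : m ≤ k) :
    ((∀ u s : Fin k → A, ENConnCI E u s → nECount E u s = m → E (f u) (f s)) →
      ((∀ u s : Fin k → A, ENConnCI E u s →
          (nECount E u s = k - m ∨ nECount E u s = k - m + 1) →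
          NRel E (f u) (f s)) ∨
       (∃ t ∈ R, IsOP E E t) ∨ (∃ t ∈ R, IsOP (NRel E) (NRel E) t))) ∧
    ((∀ u s : Fin k → A, ENConnCI E u s → nECount E u s = m → NRel E (f u) (f s)) →
      ((∀ u s : Fin k → A, ENConnCI E u s →
          (nECount E u s = k - m ∨ nECount E u s = k - m + 1) →
          E (f u) (f s)) ∨
       (∃ t ∈ R, IsOP E E t) ∨ (∃ t ∈ R, IsOP (NRel E) (NRel E) t))) :=
  stmt3_general E hG hext f hqnu hfNe R hpres hinv hR m hm1 hmk
end

section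
/- Let G = (A;E) be a simple graph and f : A³ → A an injection of behaviour majority which additionally is hyperplanely balanced and of behaviour projection, or hyperplanely E-constant, or hyperplanely N-constant, or hyperplanely of behaviour max and E-dominated, or hyperplanely of behaviour min and N-dominated. Then for each O ∈ {E,N}, no quaternary relation R ⊆ A⁴ preserved by f efficiently entails (O(x₁,x₂) → x₃ = x₄). -/
universe u

variable {A : Type u}

/-- Extract componentwise equalities from ternary injectivity. -/
lemma ternInj_eq {A : Type u} {f : A → A → A → A} (h : TernInj f)
    {a b c a' b' c' : A} (he : f a b c = f a' b' c') : a = a' ∧ b = b' ∧ c = c' := by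
  have := h (a₁ := (a, b, c)) (a₂ := (a', b', c')) he
  simpa [Prod.ext_iff] using this

theorem stmt5 (E : A → A → Prop) (hG : IsSimpleGraph E)
    (f : A → A → A → A) (hfinj : TernInj f)
    (hmaj : BehMajority E f)
    (hhyp : Hyperplanely (fun b => BalancedBin E b ∧ BehProj E b) f ∨
            Hyperplanely (EConstantBin E) f ∨
            Hyperplanely (NConstantBin E) f ∨
            Hyperplanely (fun b => BehMax E b ∧ EDominated E b) f ∨
            Hyperplanely (fun b => BehMin E b ∧ NDominated E b) f) :
    ∀ O : A → A → Prop, (O = E ∨ O = NRel E) →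
      ∀ R : Set (Fin 4 → A), Preserves3 f R →
        ¬ EffEntails R O (fun a b => a = b) := by
  intro O hO R hpres hEE
  obtain ⟨hent, ⟨t, htR, htO, hteq⟩, ⟨s, hsR, hsO, hsne⟩⟩ := hEE
  -- t 0 ≠ t 1
  have ht01 : t 0 ≠ t 1 := by
    rcases hO with rfl | rfl
    · intro h; exact hG.2 (t 1) (h ▸ htO)
    · exact htO.1
  -- Step 1: build s' with s' 0 ≠ s' 1, ¬ O (s' 0) (s' 1), s' 2 ≠ s' 3
  set s' : Fin 4 → A := fun j => f (s j) (t j) (t j) with hs'def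
  have hs'R : s' ∈ R := hpres s t t hsR htR htR
  have hs'ne : s' 2 ≠ s' 3 := by
    intro h
    exact hsne (ternInj_eq hfinj h).1
  have hs'01 : s' 0 ≠ s' 1 := by
    intro h
    exact ht01 (ternInj_eq hfinj h).2.1
  have hs'O : ¬ O (s' 0) (s' 1) := fun h => hs'ne (hent s' hs'R h)
  -- Step 2: build r = f(t,t,s')
  set r : Fin 4 → A := fun j => f (t j) (t j) (s' j) with hrdef
  have hrR : r ∈ R := hpres t t s' htR htR hs'R
  have hrO : O (r 0) (r 1) := by
    rcases hO with rfl | rfl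
    · exact (hmaj (t 0) (t 0) (s' 0) (t 1) (t 1) (s' 1) ht01 ht01 hs'01).2
        (Or.inl ⟨htO, htO⟩)
    · refine ⟨fun h => ht01 (ternInj_eq hfinj h).1, fun hE => ?_⟩
      rcases (hmaj (t 0) (t 0) (s' 0) (t 1) (t 1) (s' 1) ht01 ht01 hs'01).1 hE with
        ⟨h1, _⟩ | ⟨h1, _⟩ | ⟨h1, _⟩ <;> exact htO.2 h1
  have hr23 : r 2 = r 3 := hent r hrR hrO
  have : f (t 2) (t 2) (s' 2) = f (t 2) (t 2) (s' 3) := by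
    simpa [hrdef, hteq] using hr23
  exact hs'ne (ternInj_eq hfinj this).2.2
end

section
/- Let G = (A;E) be a simple graph and f : A³ → A an injection of behaviour minority which additionally is hyperplanely balanced and of behaviour projection, or hyperplanely of behaviour projection and E-dominated, or hyperplanely of behaviour projection and N-dominated, or hyperplanely balanced of behaviour xnor, or hyperplanely balanced of behaviour xor. Then for each O ∈ {E,N}, no quaternary relation R ⊆ A⁴ preserved by f efficiently entails (O(x₁,x₂) → x₃ = x₄). -/
universe u

variable {A : Type u}

private lemma neOfE' {E : A → A → Prop} (hG : IsSimpleGraph E) {a b : A} (h : E a b) :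
    a ≠ b := by
  rintro rfl; exact hG.2 a h

private lemma eOfNotN' {E : A → A → Prop} {a b : A} (hne : a ≠ b) (h : ¬ NRel E a b) :
    E a b := by
  by_contra hE; exact h ⟨hne, hE⟩

private lemma ternInj_ne {f : A → A → A → A} (hfinj : TernInj f) {a b c a' b' c' : A}
    (h : a ≠ a' ∨ b ≠ b' ∨ c ≠ c') : f a b c ≠ f a' b' c' := by
  intro he
  have h3 : ((a, b, c) : A × A × A) = (a', b', c') := hfinj he
  simp only [Prod.mk.injEq] at h3
  tauto

private lemma minority_E {E : A → A → Prop} {f : A → A → A → A} (hG : IsSimpleGraph E)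
    (hfinj : TernInj f) (hmin : BehMinority E f) {a b c d c' d' : A}
    (hab : E a b) (hcd : NRel E c d) (h2 : NRel E c' d') :
    E (f a c c') (f b d d') := by
  have hne : a ≠ b := neOfE' hG hab
  have hiff := hmin a c c' b d d' hne hcd.1 h2.1
  refine eOfNotN' (ternInj_ne hfinj (Or.inl hne)) ?_
  intro hN
  rw [hiff] at hN
  have h1 := hcd.2
  have h2' := h2.2
  simp only [NRel] at hN
  tauto

theorem stmt6 (E : A → A → Prop) (hG : IsSimpleGraph E)
    (f : A → A → A → A) (hfinj : TernInj f)
    (hmin : BehMinority E f)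
    (hhyp : Hyperplanely (fun b => BalancedBin E b ∧ BehProj E b) f ∨
            Hyperplanely (fun b => BehProj E b ∧ EDominated E b) f ∨
            Hyperplanely (fun b => BehProj E b ∧ NDominated E b) f ∨
            Hyperplanely (fun b => BalancedBin E b ∧ BehXnor E b) f ∨
            Hyperplanely (fun b => BalancedBin E b ∧ BehXor E b) f) :
    ∀ O : A → A → Prop, (O = E ∨ O = NRel E) →
      ∀ R : Set (Fin 4 → A), Preserves3 f R →
        ¬ EffEntails R O (fun a b => a = b) := by
  rintro O hO R hpres ⟨h1, ⟨ta, hta, haO, haEq⟩, ⟨tb, htb, hbO, hbNe⟩⟩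
  have keyA : ¬ O (f (ta 0) (tb 0) (tb 0)) (f (ta 1) (tb 1) (tb 1)) := by
    intro hO'
    have h23 := h1 _ (hpres ta tb tb hta htb htb) hO'
    exact ternInj_ne hfinj (Or.inr (Or.inl hbNe)) h23
  have keyB : ¬ O (f (ta 0) (ta 0) (tb 0)) (f (ta 1) (ta 1) (tb 1)) := by
    intro hO'
    have h23 := h1 _ (hpres ta ta tb hta hta htb) hO'
    exact ternInj_ne hfinj (Or.inr (Or.inr hbNe)) h23
  rcases hO with rfl | rfl
  · -- O = E
    have hne_ab : ta 0 ≠ ta 1 := neOfE' hG haO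
    by_cases hcd : tb 0 = tb 1
    · rcases hhyp with h | h | h | h | h
      · refine keyA ?_
        rw [← hcd]
        exact ((h (tb 0)).1.1 (ta 0) (tb 0) (ta 1) (tb 0)).1 (Or.inl ⟨haO, rfl⟩)
      · refine keyA ?_
        rw [← hcd]
        exact (h (tb 0)).1.2 (ta 0) (tb 0) (ta 1) (tb 0) (Or.inr ⟨hne_ab, rfl⟩)
      · refine keyB ?_
        rw [← hcd]
        rcases (h (tb 0)).1.1 with hp | hp
        · exact (hp (ta 0) (ta 0) (ta 1) (ta 1) hne_ab hne_ab).mpr haO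
        · exact (hp (ta 0) (ta 0) (ta 1) (ta 1) hne_ab hne_ab).mpr haO
      · refine keyA ?_
        rw [← hcd]
        exact ((h (tb 0)).1.1 (ta 0) (tb 0) (ta 1) (tb 0)).1 (Or.inl ⟨haO, rfl⟩)
      · refine keyA ?_
        rw [← hcd]
        exact ((h (tb 0)).1.1 (ta 0) (tb 0) (ta 1) (tb 0)).1 (Or.inl ⟨haO, rfl⟩)
    · have hN : NRel O (tb 0) (tb 1) := ⟨hcd, hbO⟩
      exact keyA (minority_E hG hfinj hmin haO hN hN)
  · -- O = NRel E
    by_cases hcd : tb 0 = tb 1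
    · rcases hhyp with h | h | h | h | h
      · refine keyA ?_
        rw [← hcd]
        exact ((h (tb 0)).1.1 (ta 0) (tb 0) (ta 1) (tb 0)).2 (Or.inl ⟨haO, rfl⟩)
      · refine keyB ?_
        rw [← hcd]
        refine ⟨ternInj_ne hfinj (Or.inl haO.1), ?_⟩
        intro hE
        rcases (h (tb 0)).1.1 with hp | hp
        · exact haO.2 ((hp (ta 0) (ta 0) (ta 1) (ta 1) haO.1 haO.1).mp hE)
        · exact haO.2 ((hp (ta 0) (ta 0) (ta 1) (ta 1) haO.1 haO.1).mp hE)
      · refine keyA ?_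
        rw [← hcd]
        exact (h (tb 0)).1.2 (ta 0) (tb 0) (ta 1) (tb 0) (Or.inr ⟨haO.1, rfl⟩)
      · refine keyA ?_
        rw [← hcd]
        exact ((h (tb 0)).1.1 (ta 0) (tb 0) (ta 1) (tb 0)).2 (Or.inl ⟨haO, rfl⟩)
      · refine keyA ?_
        rw [← hcd]
        exact ((h (tb 0)).1.1 (ta 0) (tb 0) (ta 1) (tb 0)).2 (Or.inl ⟨haO, rfl⟩)
    · have hE : E (tb 0) (tb 1) := eOfNotN' hcd hbO
      exact keyA ((hmin (ta 0) (tb 0) (tb 0) (ta 1) (tb 1) (tb 1) haO.1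
        (neOfE' hG hE) (neOfE' hG hE)).mpr (Or.inr (Or.inr (Or.inr ⟨haO, hE, hE⟩))))
end

section
/- Let G = (A;E) be a simple graph and let h : A³ → A be an operation such that (i) N(h(a),h(b)) holds whenever N(a[i],b[i]) holds for some i ∈ {1,2,3}, and (ii) whenever (a[i],b[i]) ∈ E ∪ = for all i, E(h(a),h(b)) holds iff the number of coordinates i with E(a[i],b[i]) is odd. Then no quaternary relation R ⊆ A⁴ preserved by h (1) efficiently entails (N(x₁,x₂) → uuE(x₃,x₄)); (2) efficiently entails (N(x₁,x₂) → x₃ = x₄); or (3) efficiently entails (N(x₁,x₂) → E(x₃,x₄)) while also entailing uuE(x₃,x₄). -/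
universe u

variable {A : Type u}

theorem stmt7 (E : A → A → Prop) (hG : IsSimpleGraph E)
    (h : A → A → A → A) (hh : HMinority E h) :
    ∀ R : Set (Fin 4 → A), Preserves3 h R →
      (¬ EffEntails R (NRel E) (uu E)) ∧
      (¬ EffEntails R (NRel E) (fun a b => a = b)) ∧
      (¬ (EffEntails R (NRel E) E ∧ Entails R (fun _ _ x₃ x₄ => uu E x₃ x₄))) := by
  intro R hR
  obtain ⟨hsymm, hirr⟩ := hG
  obtain ⟨hN, hE⟩ := hh
  refine ⟨?_, ?_, ?_⟩
  · rintro ⟨himp, ⟨t₁, ht₁R, ht₁N, ht₁P⟩, ⟨t₂, ht₂R, ht₂N, ht₂P⟩⟩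
    have hs : (fun j => h (t₁ j) (t₂ j) (t₁ j)) ∈ R := hR t₁ t₂ t₁ ht₁R ht₂R ht₁R
    have hNs : NRel E (h (t₁ 0) (t₂ 0) (t₁ 0)) (h (t₁ 1) (t₂ 1) (t₁ 1)) :=
      hN _ _ _ _ _ _ (Or.inl ht₁N)
    have huu := himp _ hs hNs
    have ht₂N' : NRel E (t₂ 2) (t₂ 3) := by
      constructor
      · intro heq; exact ht₂P (Or.inr heq)
      · intro hedge; exact ht₂P (Or.inl hedge)
    have hN23 : NRel E (h (t₁ 2) (t₂ 2) (t₁ 2)) (h (t₁ 3) (t₂ 3) (t₁ 3)) :=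
      hN _ _ _ _ _ _ (Or.inr (Or.inl ht₂N'))
    rcases huu with hEdge | heq
    · exact hN23.2 hEdge
    · exact hN23.1 heq
  · rintro ⟨himp, ⟨t₁, ht₁R, ht₁N, ht₁P⟩, ⟨t₂, ht₂R, ht₂N, ht₂P⟩⟩
    have hs : (fun j => h (t₁ j) (t₂ j) (t₁ j)) ∈ R := hR t₁ t₂ t₁ ht₁R ht₂R ht₁R
    have hNs : NRel E (h (t₁ 0) (t₂ 0) (t₁ 0)) (h (t₁ 1) (t₂ 1) (t₁ 1)) :=
      hN _ _ _ _ _ _ (Or.inl ht₁N)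
    have heq := himp _ hs hNs
    simp only at heq
    by_cases hEdge : E (t₂ 2) (t₂ 3)
    · have hnot : ¬ E (t₁ 2) (t₁ 3) := by rw [ht₁P]; exact hirr _
      have hE23 : E (h (t₁ 2) (t₂ 2) (t₁ 2)) (h (t₁ 3) (t₂ 3) (t₁ 3)) := by
        rw [hE _ _ _ _ _ _ (Or.inr ht₁P) (Or.inl hEdge) (Or.inr ht₁P)]
        exact Or.inr (Or.inr (Or.inl ⟨hnot, hEdge, hnot⟩))
      rw [heq] at hE23
      exact hirr _ hE23
    · have hN23 : NRel E (h (t₁ 2) (t₂ 2) (t₁ 2)) (h (t₁ 3) (t₂ 3) (t₁ 3)) :=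
        hN _ _ _ _ _ _ (Or.inr (Or.inl ⟨ht₂P, hEdge⟩))
      exact hN23.1 heq
  · rintro ⟨⟨himp, ⟨t₁, ht₁R, ht₁N, ht₁P⟩, ⟨t₂, ht₂R, ht₂N, ht₂P⟩⟩, hent⟩
    have ht₂eq : t₂ 2 = t₂ 3 := by
      rcases hent t₂ ht₂R with hEdge | heq
      · exact absurd hEdge ht₂P
      · exact heq
    have hs : (fun j => h (t₁ j) (t₂ j) (t₁ j)) ∈ R := hR t₁ t₂ t₁ ht₁R ht₂R ht₁R
    have hNs : NRel E (h (t₁ 0) (t₂ 0) (t₁ 0)) (h (t₁ 1) (t₂ 1) (t₁ 1)) :=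
      hN _ _ _ _ _ _ (Or.inl ht₁N)
    have hE23 := himp _ hs hNs
    rw [hE _ _ _ _ _ _ (Or.inl ht₁P) (Or.inr ht₂eq) (Or.inl ht₁P)] at hE23
    have hnot2 : ¬ E (t₂ 2) (t₂ 3) := ht₂P
    tauto
end

section
/- Let G = (A;E) be C²_ω, the countably infinite graph that is a disjoint union of ω edges (a perfect matching). Let h : A³ → A be an operation such that (i) N(h(a),h(b)) whenever N(a[i],b[i]) for some i, and (ii) whenever (a[i],b[i]) ∈ E ∪ = for all i, E(h(a),h(b)) iff the number of coordinates with E(a[i],b[i]) is odd. Let f : A^k → A be a quasi near-unanimity operation preserving E, N and uuE. Then no quaternary relation R ⊆ A⁴ that is preserved by both h and f and is invariant under all automorphisms of G satisfies: R efficiently entails (E(x₁,x₂) → x₃ = x₄) and entails (uuE(x₁,x₂) ∧ N(x₂,x₃) ∧ uuE(x₃,x₄)); and no such R satisfies: R efficiently entails ((x₁ = x₂) → E(x₃,x₄)) and entails (uuE(x₁,x₂) ∧ N(x₂,x₃) ∧ uuE(x₃,x₄)). -/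
/-!
Automorphisms of `C²_ω` act transitively on pairs of vertices lying on different edges and
commute with replacing a vertex by its mate. So an `(E,=)`-tuple and an `(=,E)`-tuple of `R`,
whose middle entries are non-adjacent and hence on different edges, yield all such tuples. On
the two vertices of one edge, `f` separates the two constant tuples (it preserves `E`), so
switching coordinates one at a time finds a coordinate `j` whose switch changes the value of
`f`; on a second edge, quasi near-unanimity at `j` gives a pattern whose value changes when
every coordinate except `j` is switched. Applying `f` to columns that are `(E,=)`-tuples at `j`
and `(=,E)`-tuples elsewhere produces an `(E,E)`-tuple of `R`. This refutes `E(x₁,x₂) → x₃ = x₄`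
at once. Against `x₁ = x₂ → E(x₃,x₄)`, apply the minority `h` to the `(E,E)`-, `(E,=)`- and
`(=,E)`-tuples: both pairs of the result are non-adjacent, so the first one is an equality.
-/

universe u

variable {A : Type u}

/-- The vertex set of `C²_ω`, the disjoint union of ω edges. -/
abbrev Vtx : Type := ℕ × Bool

/-- The edge relation of `C²_ω`: `(n,b)` is adjacent to `(m,c)` iff `n = m` and `b ≠ c`. -/
def Ematch (a b : Vtx) : Prop := a.1 = b.1 ∧ a.2 ≠ b.2

def toggle (p : Bool) (v : Vtx) : Vtx := (v.1, xor p v.2)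

@[simp] lemma toggle_fst (p : Bool) (v : Vtx) : (toggle p v).1 = v.1 := rfl

@[simp] lemma toggle_false (v : Vtx) : toggle false v = v := by simp [toggle]

@[simp] lemma toggle_toggle (p q : Bool) (v : Vtx) :
    toggle q (toggle p v) = toggle (xor p q) v := by
  simp only [toggle, Prod.mk.injEq, true_and]
  cases p <;> cases q <;> simp

lemma ematch_toggle_true (v : Vtx) : Ematch v (toggle true v) := ⟨rfl, by simp [toggle]⟩

lemma Ematch.ne {u v : Vtx} (h : Ematch u v) : u ≠ v := fun huv => h.2 (by rw [huv])

lemma Ematch.eq_toggle_true {u v : Vtx} (h : Ematch u v) : v = toggle true u := by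
  obtain ⟨h₁, h₂⟩ := h
  exact Prod.ext h₁.symm (by cases hu : u.2 <;> simp_all [toggle])

lemma NRel.fst_ne {u v : Vtx} (h : NRel Ematch u v) : u.1 ≠ v.1 := fun h₁ =>
  if h₂ : u.2 = v.2 then h.1 (Prod.ext h₁ h₂) else h.2 ⟨h₁, h₂⟩

lemma isGraphAuto_prodShear (σ : ℕ ≃ ℕ) (e : ℕ → Equiv.Perm Bool) :
    IsGraphAuto Ematch (σ.prodShear e) := by
  rintro ⟨m, b⟩ ⟨n, c⟩
  simp only [Ematch, Equiv.prodShear_apply, σ.injective.eq_iff, ne_eq]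
  constructor
  · rintro ⟨rfl, h⟩
    exact ⟨rfl, fun hbc => h (hbc ▸ rfl)⟩
  · rintro ⟨rfl, h⟩
    exact ⟨rfl, fun hbc => h ((e m).injective hbc)⟩

lemma exists_isGraphAuto_apply_eq_apply_eq {u v x y : Vtx} (huv : u.1 ≠ v.1) (hxy : x.1 ≠ y.1) :
    ∃ α, IsGraphAuto Ematch α ∧ α u = x ∧ α v = y := by
  obtain ⟨σ, hσ⟩ := Equiv.Perm.exists_extending_pair ![u.1, v.1] ![x.1, y.1]
    (injective_pair_iff_ne.mpr huv) (injective_pair_iff_ne.mpr hxy)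
  let e : ℕ → Equiv.Perm Bool := fun n =>
    if n = u.1 then Equiv.swap u.2 x.2 else Equiv.swap v.2 y.2
  refine ⟨σ.prodShear e, isGraphAuto_prodShear σ e, ?_, ?_⟩
  · exact Prod.ext (hσ 0) (by simp [e])
  · exact Prod.ext (hσ 1) (by simp [e, huv.symm])

lemma IsGraphAuto.map_toggle {α : Vtx ≃ Vtx} (hα : IsGraphAuto Ematch α) (p : Bool) (v : Vtx) :
    α (toggle p v) = toggle p (α v) := by
  cases p
  · simp
  · exact ((hα _ _).mpr (ematch_toggle_true v)).eq_toggle_true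

lemma AutoInvariant.toggle_mem {R : Set (Fin 4 → Vtx)} (hR : AutoInvariant Ematch R)
    {u v : Vtx} (huv : u.1 ≠ v.1) {p q : Bool} (h : ![u, toggle p u, v, toggle q v] ∈ R)
    {x y : Vtx} (hxy : x.1 ≠ y.1) : ![x, toggle p x, y, toggle q y] ∈ R := by
  obtain ⟨α, hα, rfl, rfl⟩ := exists_isGraphAuto_apply_eq_apply_eq huv hxy
  convert hR α hα _ h using 1
  funext i
  fin_cases i <;> simp [hα.map_toggle]

lemma exists_lt_apply_ne_apply_succ {β : Type*} (g : ℕ → β) {k : ℕ} (h : g 0 ≠ g k) :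
    ∃ m < k, g m ≠ g (m + 1) := by
  induction k with
  | zero => exact absurd rfl h
  | succ n ih =>
    by_cases hn : g n = g (n + 1)
    · obtain ⟨m, hm, hne⟩ := ih (fun h0 => h (h0.trans hn))
      exact ⟨m, hm.trans n.lt_succ_self, hne⟩
    · exact ⟨n, n.lt_succ_self, hn⟩

lemma exists_ne_xor_single {β : Type*} {k : ℕ} (F : (Fin k → Bool) → β)
    (h : F (fun _ => false) ≠ F (fun _ => true)) :
    ∃ χ j, F χ ≠ F (fun i => xor (χ i) (decide (i = j))) := by
  obtain ⟨m, hm, hne⟩ := exists_lt_apply_ne_apply_succ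
    (fun m => F (fun i => decide (i.val < m))) (k := k) (by simpa using h)
  refine ⟨fun i => decide (i.val < m), ⟨m, hm⟩, ?_⟩
  convert hne using 3 with i
  simp only [Fin.ext_iff]
  grind

lemma exists_ne_xor_compl {β : Type*} {k : ℕ} (F : (Fin k → Bool) → β) (j : Fin k)
    (hj : F (fun i => decide (i = j)) = F (fun _ => false))
    (h : F (fun _ => false) ≠ F (fun _ => true)) :
    ∃ χ, F χ ≠ F (fun i => xor (χ i) (!decide (i = j))) := by
  by_cases hc : F (fun i => !decide (i = j)) = F (fun _ => false)
  · exact ⟨fun i => decide (i = j), by simpa [hj] using h⟩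
  · exact ⟨fun _ => false, by simpa using Ne.symm hc⟩

lemma IsQnu.apply_toggle_single {k : ℕ} {f : (Fin k → Vtx) → Vtx} (hqnu : IsQnu f)
    (c : Vtx) (j : Fin k) :
    f (fun i => toggle (decide (i = j)) c) = f (fun _ => c) := by
  convert hqnu c (toggle true c) j using 2
  funext i
  by_cases hij : i = j <;> simp [hij]

lemma exists_mem_ne_ne_of_isQnu {k : ℕ} {f : (Fin k → Vtx) → Vtx} (hqnu : IsQnu f)
    (hfE : PreservesRel f Ematch) {R : Set (Fin 4 → Vtx)} (hRf : Preserves f R)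
    (hR : ∀ x y : Vtx, x.1 ≠ y.1 → ∀ p : Bool, ![x, toggle p x, y, toggle (!p) y] ∈ R) :
    ∃ s ∈ R, s 0 ≠ s 1 ∧ s 2 ≠ s 3 := by
  have hsep (c : Vtx) : f (fun _ => toggle false c) ≠ f (fun _ => toggle true c) :=
    (hfE _ _ fun _ => by simpa using ematch_toggle_true c).ne
  set c : Vtx := (0, false)
  set d : Vtx := (1, false)
  obtain ⟨χ, j, hχ⟩ := exists_ne_xor_single (fun χ => f fun i => toggle (χ i) c) (hsep c)
  obtain ⟨ψ, hψ⟩ := exists_ne_xor_compl (fun ψ => f fun i => toggle (ψ i) d) j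
    (by simpa using hqnu.apply_toggle_single d j) (hsep d)
  refine ⟨_, hRf (fun i => ![toggle (χ i) c, toggle (decide (i = j)) (toggle (χ i) c),
    toggle (ψ i) d, toggle (!decide (i = j)) (toggle (ψ i) d)])
    (fun i => hR _ _ (by simp [c, d]) _), ?_, ?_⟩
  · simpa using hχ
  · simpa using hψ

lemma exists_mem_ematch_ematch {k : ℕ} {f : (Fin k → Vtx) → Vtx} (hqnu : IsQnu f)
    (hfE : PreservesRel f Ematch) {R : Set (Fin 4 → Vtx)} (hRf : Preserves f R)
    (hinv : AutoInvariant Ematch R)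
    (hent : Entails R (fun x₁ x₂ x₃ x₄ =>
      uu Ematch x₁ x₂ ∧ NRel Ematch x₂ x₃ ∧ uu Ematch x₃ x₄))
    {a b : Fin 4 → Vtx} (ha : a ∈ R) (hb : b ∈ R)
    (ha₀₁ : Ematch (a 0) (a 1)) (ha₂₃ : a 2 = a 3) (hb₀₁ : b 0 = b 1)
    (hb₂₃ : Ematch (b 2) (b 3)) :
    ∃ s ∈ R, Ematch (s 0) (s 1) ∧ Ematch (s 2) (s 3) := by
  have hR (x y : Vtx) (hxy : x.1 ≠ y.1) (p : Bool) :
      ![x, toggle p x, y, toggle (!p) y] ∈ R := by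
    cases p
    · have hb' : b = ![b 0, toggle false (b 0), b 2, toggle true (b 2)] := by
        funext i; fin_cases i <;> simp [hb₀₁, hb₂₃.eq_toggle_true]
      exact hinv.toggle_mem (hb₀₁ ▸ (hent b hb).2.1.fst_ne) (hb' ▸ hb) hxy
    · have ha' : a = ![a 0, toggle true (a 0), a 2, toggle false (a 2)] := by
        funext i; fin_cases i <;> simp [ha₂₃, ha₀₁.eq_toggle_true]
      exact hinv.toggle_mem (ha₀₁.1 ▸ (hent a ha).2.1.fst_ne) (ha' ▸ ha) hxy
  obtain ⟨s, hs, hs₀₁, hs₂₃⟩ := exists_mem_ne_ne_of_isQnu hqnu hfE hRf hR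
  exact ⟨s, hs, (hent s hs).1.resolve_right hs₀₁, (hent s hs).2.2.resolve_right hs₂₃⟩

lemma HMinority.not_rel_of_rel_rel_eq {E : A → A → Prop} {h : A → A → A → A}
    (hh : HMinority E h) (hirr : ∀ a, ¬ E a a) {a₁ a₂ a₃ b₁ b₂ b₃ : A}
    (h₁ : E a₁ b₁) (h₂ : E a₂ b₂) (h₃ : a₃ = b₃) : ¬ E (h a₁ a₂ a₃) (h b₁ b₂ b₃) := by
  subst h₃
  rw [hh.2 _ _ _ _ _ _ (.inl h₁) (.inl h₂) (.inr rfl)]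
  have := hirr a₃
  tauto

lemma HMinority.not_rel_of_rel_eq_rel {E : A → A → Prop} {h : A → A → A → A}
    (hh : HMinority E h) (hirr : ∀ a, ¬ E a a) {a₁ a₂ a₃ b₁ b₂ b₃ : A}
    (h₁ : E a₁ b₁) (h₂ : a₂ = b₂) (h₃ : E a₃ b₃) : ¬ E (h a₁ a₂ a₃) (h b₁ b₂ b₃) := by
  subst h₂
  rw [hh.2 _ _ _ _ _ _ (.inl h₁) (.inr rfl) (.inl h₃)]
  have := hirr a₂
  tauto

theorem stmt8_general {k : ℕ} (h : Vtx → Vtx → Vtx → Vtx) (hh : HMinority Ematch h)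
    (f : (Fin k → Vtx) → Vtx) (hqnu : IsQnu f)
    (hfE : PreservesRel f Ematch)
    (R : Set (Fin 4 → Vtx)) (hRh : Preserves3 h R) (hRf : Preserves f R)
    (hinv : AutoInvariant Ematch R) :
    (¬ (EffEntails R Ematch (fun a b => a = b) ∧
        Entails R (fun x₁ x₂ x₃ x₄ =>
          uu Ematch x₁ x₂ ∧ NRel Ematch x₂ x₃ ∧ uu Ematch x₃ x₄))) ∧
    (¬ (EffEntails R (fun a b => a = b) Ematch ∧
        Entails R (fun x₁ x₂ x₃ x₄ =>
          uu Ematch x₁ x₂ ∧ NRel Ematch x₂ x₃ ∧ uu Ematch x₃ x₄))) := by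
  have hirr (v : Vtx) : ¬ Ematch v v := fun hv => hv.ne rfl
  refine ⟨?_, ?_⟩
  · rintro ⟨⟨himp, ⟨a, ha, ha₀₁, ha₂₃⟩, ⟨b, hb, hb₀₁, hb₂₃⟩⟩, hent⟩
    obtain ⟨s, hs, hs₀₁, hs₂₃⟩ := exists_mem_ematch_ematch hqnu hfE hRf hinv hent ha hb
      ha₀₁ ha₂₃ ((hent b hb).1.resolve_left hb₀₁) ((hent b hb).2.2.resolve_right hb₂₃)
    exact hs₂₃.ne (himp s hs hs₀₁)
  · rintro ⟨⟨himp, ⟨b, hb, hb₀₁, hb₂₃⟩, ⟨a, ha, hna₀₁, hna₂₃⟩⟩, hent⟩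
    have ha₀₁ : Ematch (a 0) (a 1) := (hent a ha).1.resolve_right hna₀₁
    have ha₂₃ : a 2 = a 3 := (hent a ha).2.2.resolve_left hna₂₃
    obtain ⟨s, hs, hs₀₁, hs₂₃⟩ :=
      exists_mem_ematch_ematch hqnu hfE hRf hinv hent ha hb ha₀₁ ha₂₃ hb₀₁ hb₂₃
    have hz := hRh s a b hs ha hb
    have hz₀₁ : h (s 0) (a 0) (b 0) = h (s 1) (a 1) (b 1) :=
      (hent _ hz).1.resolve_left (hh.not_rel_of_rel_rel_eq hirr hs₀₁ ha₀₁ hb₀₁)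
    exact hh.not_rel_of_rel_eq_rel hirr hs₂₃ ha₂₃ hb₂₃ (himp _ hz hz₀₁)

theorem stmt8 {k : ℕ} (h : Vtx → Vtx → Vtx → Vtx) (hh : HMinority Ematch h)
    (f : (Fin k → Vtx) → Vtx) (hqnu : IsQnu f)
    (hfE : PreservesRel f Ematch) (hfN : PreservesRel f (NRel Ematch))
    (hfuuE : PreservesRel f (uu Ematch))
    (R : Set (Fin 4 → Vtx)) (hRh : Preserves3 h R) (hRf : Preserves f R)
    (hinv : AutoInvariant Ematch R) :
    (¬ (EffEntails R Ematch (fun a b => a = b) ∧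
        Entails R (fun x₁ x₂ x₃ x₄ =>
          uu Ematch x₁ x₂ ∧ NRel Ematch x₂ x₃ ∧ uu Ematch x₃ x₄))) ∧
    (¬ (EffEntails R (fun a b => a = b) Ematch ∧
        Entails R (fun x₁ x₂ x₃ x₄ =>
          uu Ematch x₁ x₂ ∧ NRel Ematch x₂ x₃ ∧ uu Ematch x₃ x₄))) :=
  stmt8_general h hh f hqnu hfE R hRh hRf hinv
end

section
/- Let G = (A;E) be C²_ω, the countably infinite graph that is a disjoint union of ω edges (a perfect matching). Let h : A³ → A be an operation such that (i) N(h(a),h(b)) whenever N(a[i],b[i]) for some i, and (ii) whenever (a[i],b[i]) ∈ E ∪ = for all i, E(h(a),h(b)) iff the number of coordinates with E(a[i],b[i]) is odd. Let f : A^k → A be a quasi near-unanimity operation preserving E, N and uuE. Then no quaternary relation R ⊆ A⁴ that is preserved by both h and f and is invariant under all automorphisms of G satisfies: R efficiently entails (E(x₁,x₂) → E(x₃,x₄)) and entails (uuE(x₁,x₂) ∧ N(x₂,x₃) ∧ uuE(x₃,x₄)); and no such R satisfies: R efficiently entails ((x₁ = x₂) → (x₃ = x₄)) and entails (uuE(x₁,x₂)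 ∧ N(x₂,x₃) ∧ uuE(x₃,x₄)). -/
universe u

variable {A : Type u}

/-! ### Auxiliary development -/

def vflip (v : Vtx) : Vtx := (v.1, !v.2)

lemma ematch_irrefl (v : Vtx) : ¬ Ematch v v := fun hv => hv.2 rfl

lemma ematch_flip (v : Vtx) : Ematch v (vflip v) := ⟨rfl, by simp [vflip]⟩

lemma flip_of_ematch {v w : Vtx} (hvw : Ematch v w) : w = vflip v := by
  obtain ⟨h1, h2⟩ := hvw
  cases v with
  | mk a b =>
    cases w with
    | mk c d =>
      simp only [vflip]
      simp only at h1 h2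
      subst h1
      cases b <;> cases d <;> simp_all

lemma uu_resolve {a b : Vtx} (hu : uu Ematch a b) (hn : ¬ Ematch a b) : a = b :=
  hu.resolve_left hn

lemma nrel_fst {v w : Vtx} (hn : NRel Ematch v w) : v.1 ≠ w.1 := by
  intro he
  by_cases hb : v.2 = w.2
  · exact hn.1 (Prod.ext he hb)
  · exact hn.2 ⟨he, hb⟩

def mkAuto (π : ℕ ≃ ℕ) (c : ℕ → Bool) : Vtx ≃ Vtx where
  toFun v := (π v.1, xor (c v.1) v.2)
  invFun v := (π.symm v.1, xor (c (π.symm v.1)) v.2)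
  left_inv v := by
    cases v with
    | mk n b =>
      simp only [Equiv.symm_apply_apply]
      cases hc : c n <;> cases b <;> simp [hc]
  right_inv v := by
    cases v with
    | mk n b =>
      simp only [Equiv.apply_symm_apply]
      cases hc : c (π.symm n) <;> cases b <;> simp [hc]

lemma mkAuto_apply (π : ℕ ≃ ℕ) (c : ℕ → Bool) (n : ℕ) (b : Bool) :
    mkAuto π c (n, b) = (π n, xor (c n) b) := rfl

lemma mkAuto_auto (π : ℕ ≃ ℕ) (c : ℕ → Bool) : IsGraphAuto Ematch (mkAuto π c) := by
  intro a b
  cases a with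
  | mk n x =>
    cases b with
    | mk m y =>
      simp only [mkAuto_apply, Ematch]
      constructor
      · rintro ⟨h1, h2⟩
        have hnm : n = m := π.injective h1
        subst hnm
        exact ⟨rfl, fun he => h2 (by rw [he])⟩
      · rintro ⟨h1, h2⟩
        subst h1
        refine ⟨rfl, fun he => h2 ?_⟩
        cases hc : c n <;> cases x <;> cases y <;> simp_all

def permTo (p q : ℕ) : ℕ ≃ ℕ :=
  (Equiv.swap 1 ((Equiv.swap 0 p).symm q)).trans (Equiv.swap 0 p)

lemma permTo_zero {p q : ℕ} (hpq : p ≠ q) : permTo p q 0 = p := by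
  have h0 : (Equiv.swap 0 p).symm q ≠ 0 := by
    intro he
    apply hpq
    have h2 := congrArg (Equiv.swap 0 p) he
    simpa using h2.symm
  show (Equiv.swap 0 p) ((Equiv.swap 1 ((Equiv.swap 0 p).symm q)) 0) = p
  rw [Equiv.swap_apply_of_ne_of_ne (by norm_num) (Ne.symm h0)]
  simp

lemma permTo_one {p q : ℕ} (hpq : p ≠ q) : permTo p q 1 = q := by
  show (Equiv.swap 0 p) ((Equiv.swap 1 ((Equiv.swap 0 p).symm q)) 1) = q
  rw [Equiv.swap_apply_left]
  simp

lemma permTo_symm_p {p q : ℕ} (hpq : p ≠ q) : (permTo p q).symm p = 0 := by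
  rw [Equiv.symm_apply_eq, permTo_zero hpq]

lemma permTo_symm_q {p q : ℕ} (hpq : p ≠ q) : (permTo p q).symm q = 1 := by
  rw [Equiv.symm_apply_eq, permTo_one hpq]

def quad (a b c d : Vtx) : Fin 4 → Vtx :=
  fun j => if j = 0 then a else if j = 1 then b else if j = 2 then c else d

@[simp] lemma quad0 (a b c d : Vtx) : quad a b c d 0 = a := rfl
@[simp] lemma quad1 (a b c d : Vtx) : quad a b c d 1 = b := rfl
@[simp] lemma quad2 (a b c d : Vtx) : quad a b c d 2 = c := rfl
@[simp] lemma quad3 (a b c d : Vtx) : quad a b c d 3 = d := rfl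

def T1c : Fin 4 → Vtx := quad (0, false) (0, true) (1, false) (1, true)
def T2c : Fin 4 → Vtx := quad (0, false) (0, false) (1, false) (1, false)

/-- forward automorphism sending the canonical tuples onto given edges -/
noncomputable def fwdAuto (x y : Vtx) : Vtx ≃ Vtx :=
  mkAuto (permTo x.1 y.1) (fun n => if n = 0 then x.2 else y.2)

lemma fwdAuto_evals (x y : Vtx) (hxy : x.1 ≠ y.1) :
    fwdAuto x y (0, false) = x ∧ fwdAuto x y (0, true) = vflip x ∧
    fwdAuto x y (1, false) = y ∧ fwdAuto x y (1, true) = vflip y := by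
  have h0 : permTo x.1 y.1 0 = x.1 := permTo_zero hxy
  have h1 : permTo x.1 y.1 1 = y.1 := permTo_one hxy
  refine ⟨?_, ?_, ?_, ?_⟩
  · show ((permTo x.1 y.1) 0, xor (if (0:ℕ) = 0 then x.2 else y.2) false) = x
    simp [h0]
  · show ((permTo x.1 y.1) 0, xor (if (0:ℕ) = 0 then x.2 else y.2) true) = vflip x
    simp only [if_pos rfl, h0, vflip]
    cases x.2 <;> simp
  · show ((permTo x.1 y.1) 1, xor (if (1:ℕ) = 0 then x.2 else y.2) false) = y
    simp [h1]
  · show ((permTo x.1 y.1) 1, xor (if (1:ℕ) = 0 then x.2 else y.2) true) = vflip y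
    simp only [if_neg (by norm_num : (1:ℕ) ≠ 0), h1, vflip]
    cases y.2 <;> simp

/-- backward automorphism sending given edges onto the canonical tuples -/
noncomputable def bwdAuto (v p : Vtx) : Vtx ≃ Vtx :=
  mkAuto (permTo v.1 p.1).symm (fun n => if n = v.1 then v.2 else p.2)

lemma bwdAuto_evals (v p : Vtx) (hvp : v.1 ≠ p.1) :
    bwdAuto v p v = (0, false) ∧ bwdAuto v p (vflip v) = (0, true) ∧
    bwdAuto v p p = (1, false) ∧ bwdAuto v p (vflip p) = (1, true) := by
  have h0 : (permTo v.1 p.1).symm v.1 = 0 := permTo_symm_p hvp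
  have h1 : (permTo v.1 p.1).symm p.1 = 1 := permTo_symm_q hvp
  have hpv : p.1 ≠ v.1 := Ne.symm hvp
  refine ⟨?_, ?_, ?_, ?_⟩
  · show ((permTo v.1 p.1).symm v.1, xor (if v.1 = v.1 then v.2 else p.2) v.2) = ((0:ℕ), false)
    simp [h0]
  · show ((permTo v.1 p.1).symm v.1, xor (if v.1 = v.1 then v.2 else p.2) (!v.2)) = ((0:ℕ), true)
    simp only [if_pos rfl, h0]
    cases v.2 <;> simp
  · show ((permTo v.1 p.1).symm p.1, xor (if p.1 = v.1 then v.2 else p.2) p.2) = ((1:ℕ), false)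
    simp [h1, hpv]
  · show ((permTo v.1 p.1).symm p.1, xor (if p.1 = v.1 then v.2 else p.2) (!p.2)) = ((1:ℕ), true)
    simp only [if_neg hpv, h1]
    cases p.2 <;> simp

lemma T1c_mem {R : Set (Fin 4 → Vtx)} (hinv : AutoInvariant Ematch R)
    {t : Fin 4 → Vtx} (ht : t ∈ R)
    (h1 : t 1 = vflip (t 0)) (h3 : t 3 = vflip (t 2)) (h02 : (t 0).1 ≠ (t 2).1) :
    T1c ∈ R := by
  obtain ⟨e0, e1, e2, e3⟩ := bwdAuto_evals (t 0) (t 2) h02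
  have hmem := hinv (bwdAuto (t 0) (t 2)) (mkAuto_auto _ _) t ht
  have heq : (fun i => bwdAuto (t 0) (t 2) (t i)) = T1c := by
    funext i
    fin_cases i
    · exact e0
    · show bwdAuto (t 0) (t 2) (t 1) = ((0 : ℕ), true)
      rw [h1]; exact e1
    · exact e2
    · show bwdAuto (t 0) (t 2) (t 3) = ((1 : ℕ), true)
      rw [h3]; exact e3
  rwa [heq] at hmem

lemma T2c_mem {R : Set (Fin 4 → Vtx)} (hinv : AutoInvariant Ematch R)
    {t : Fin 4 → Vtx} (ht : t ∈ R)
    (h1 : t 1 = t 0) (h3 : t 3 = t 2) (h02 : (t 0).1 ≠ (t 2).1) :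
    T2c ∈ R := by
  obtain ⟨e0, e1, e2, e3⟩ := bwdAuto_evals (t 0) (t 2) h02
  have hmem := hinv (bwdAuto (t 0) (t 2)) (mkAuto_auto _ _) t ht
  have heq : (fun i => bwdAuto (t 0) (t 2) (t i)) = T2c := by
    funext i
    fin_cases i
    · exact e0
    · show bwdAuto (t 0) (t 2) (t 1) = ((0 : ℕ), false)
      rw [h1]; exact e0
    · exact e2
    · show bwdAuto (t 0) (t 2) (t 3) = ((1 : ℕ), false)
      rw [h3]; exact e2
  rwa [heq] at hmem

lemma quad_mem_of_T1c {R : Set (Fin 4 → Vtx)} (hinv : AutoInvariant Ematch R)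
    (hT1 : T1c ∈ R) (x y : Vtx) (hxy : x.1 ≠ y.1) :
    quad x (vflip x) y (vflip y) ∈ R := by
  obtain ⟨e0, e1, e2, e3⟩ := fwdAuto_evals x y hxy
  have hmem := hinv (fwdAuto x y) (mkAuto_auto _ _) T1c hT1
  have heq : (fun i => fwdAuto x y (T1c i)) = quad x (vflip x) y (vflip y) := by
    funext i
    fin_cases i
    · exact e0
    · exact e1
    · exact e2
    · exact e3
  rwa [heq] at hmem

lemma quad_mem_of_T2c {R : Set (Fin 4 → Vtx)} (hinv : AutoInvariant Ematch R)
    (hT2 : T2c ∈ R) (x y : Vtx) (hxy : x.1 ≠ y.1) :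
    quad x x y y ∈ R := by
  obtain ⟨e0, e1, e2, e3⟩ := fwdAuto_evals x y hxy
  have hmem := hinv (fwdAuto x y) (mkAuto_auto _ _) T2c hT2
  have heq : (fun i => fwdAuto x y (T2c i)) = quad x x y y := by
    funext i
    fin_cases i
    · exact e0
    · exact e0
    · exact e2
    · exact e2
  rwa [heq] at hmem

/-- flip the coordinates of `x` indicated by `δ` -/
def apflip {k : ℕ} (δ : Fin k → Bool) (x : Fin k → Vtx) : Fin k → Vtx :=
  fun i => if δ i then vflip (x i) else x i

lemma mainLemma {k : ℕ} (f : (Fin k → Vtx) → Vtx) (hqnu : IsQnu f)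
    (hfE : PreservesRel f Ematch)
    (R : Set (Fin 4 → Vtx)) (hRf : Preserves f R) (hinv : AutoInvariant Ematch R)
    (hEnt : Entails R (fun x₁ x₂ x₃ x₄ =>
        uu Ematch x₁ x₂ ∧ NRel Ematch x₂ x₃ ∧ uu Ematch x₃ x₄))
    (hT1 : T1c ∈ R) (hT2 : T2c ∈ R)
    (noA : ∀ t ∈ R, Ematch (t 0) (t 1) → Ematch (t 2) (t 3))
    (noB : ∀ t ∈ R, Ematch (t 2) (t 3) → Ematch (t 0) (t 1)) : False := by
  -- Step 1: membership of the combined tuples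
  have Qmem : ∀ (δ : Fin k → Bool) (x y : Fin k → Vtx), (∀ i, (x i).1 ≠ (y i).1) →
      quad (f x) (f (apflip δ x)) (f y) (f (apflip δ y)) ∈ R := by
    intro δ x y hd
    have hargs : ∀ i, quad (x i) (apflip δ x i) (y i) (apflip δ y i) ∈ R := by
      intro i
      by_cases hδ : δ i
      · have : apflip δ x i = vflip (x i) ∧ apflip δ y i = vflip (y i) := by
          simp [apflip, hδ]
        rw [this.1, this.2]
        exact quad_mem_of_T1c hinv hT1 (x i) (y i) (hd i)
      · have : apflip δ x i = x i ∧ apflip δ y i = y i := by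
          simp [apflip, hδ]
        rw [this.1, this.2]
        exact quad_mem_of_T2c hinv hT2 (x i) (y i) (hd i)
    have hres := hRf (fun i => quad (x i) (apflip δ x i) (y i) (apflip δ y i)) hargs
    have heq : (fun j => f (fun i => quad (x i) (apflip δ x i) (y i) (apflip δ y i) j)) =
        quad (f x) (f (apflip δ x)) (f y) (f (apflip δ y)) := by
      funext j
      fin_cases j <;> rfl
    rwa [heq] at hres
  -- Step 2: transfer of flip-triviality
  have keyA : ∀ (δ : Fin k → Bool) (x y : Fin k → Vtx), (∀ i, (x i).1 ≠ (y i).1) →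
      f x = f (apflip δ x) → f y = f (apflip δ y) := by
    intro δ x y hd heq
    have hQ := Qmem δ x y hd
    obtain ⟨u01, _, u23⟩ := hEnt _ hQ
    simp only [quad0, quad1, quad2, quad3] at u01 u23
    have hne01 : ¬ Ematch (f x) (f (apflip δ x)) := by
      rw [← heq]; exact ematch_irrefl _
    have hne23 : ¬ Ematch (f y) (f (apflip δ y)) := by
      intro hE
      exact hne01 (noB _ hQ (by simpa using hE))
    exact uu_resolve u23 hne23
  have keyB : ∀ (δ : Fin k → Bool) (x y : Fin k → Vtx), (∀ i, (x i).1 ≠ (y i).1) →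
      f y = f (apflip δ y) → f x = f (apflip δ x) := by
    intro δ x y hd heq
    have hQ := Qmem δ x y hd
    obtain ⟨u01, _, u23⟩ := hEnt _ hQ
    simp only [quad0, quad1, quad2, quad3] at u01 u23
    have hne23 : ¬ Ematch (f y) (f (apflip δ y)) := by
      rw [← heq]; exact ematch_irrefl _
    have hne01 : ¬ Ematch (f x) (f (apflip δ x)) := by
      intro hE
      exact hne23 (noA _ hQ (by simpa using hE))
    exact uu_resolve u01 hne01
  have transfer : ∀ (δ : Fin k → Bool) (x z : Fin k → Vtx),
      f x = f (apflip δ x) → f z = f (apflip δ z) := by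
    intro δ x z heq
    set y : Fin k → Vtx := fun i => ((x i).1 + (z i).1 + 1, false) with hy
    have hdx : ∀ i, (x i).1 ≠ (y i).1 := fun i => by simp [hy]; omega
    have hdz : ∀ i, (z i).1 ≠ (y i).1 := fun i => by simp [hy]; omega
    exact keyB δ z y hdz (keyA δ x y hdx heq)
  -- Step 3: single flips are trivial (qnu)
  have single : ∀ (j : Fin k) (x : Fin k → Vtx),
      f x = f (apflip (fun i => decide (i = j)) x) := by
    intro j x
    apply transfer _ (fun _ => ((0, false) : Vtx))
    have : apflip (fun i => decide (i = j)) (fun _ => ((0, false) : Vtx)) =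
        Function.update (fun _ => ((0, false) : Vtx)) j (vflip (0, false)) := by
      funext i
      by_cases hi : i = j
      · subst hi; simp [apflip, Function.update]
      · simp [apflip, Function.update, hi]
    rw [this, hqnu]
  -- Step 4: all flips are trivial
  have allFlip : ∀ (s : Finset (Fin k)) (x : Fin k → Vtx),
      f x = f (apflip (fun i => decide (i ∈ s)) x) := by
    intro s
    induction s using Finset.induction_on with
    | empty =>
      intro x
      have : apflip (fun i => decide (i ∈ (∅ : Finset (Fin k)))) x = x := by
        funext i; simp [apflip]
      rw [this]
    | @insert j s hjs ih =>
      intro x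
      have hsplit : apflip (fun i => decide (i ∈ insert j s)) x =
          apflip (fun i => decide (i = j)) (apflip (fun i => decide (i ∈ s)) x) := by
        funext i
        by_cases hi : i = j
        · subst hi
          simp [apflip, hjs]
        · simp [apflip, hi, Finset.mem_insert]
      rw [hsplit, ← single, ← ih]
  -- Step 5: contradiction
  have hall := allFlip Finset.univ (fun _ => ((0, false) : Vtx))
  have h1 : apflip (fun i => decide (i ∈ (Finset.univ : Finset (Fin k))))
      (fun _ => ((0, false) : Vtx)) = (fun _ => ((0, true) : Vtx)) := by
    funext i; simp [apflip, vflip]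
  rw [h1] at hall
  have hE : Ematch (f (fun _ => ((0, false) : Vtx))) (f (fun _ => ((0, true) : Vtx))) :=
    hfE _ _ (fun i => ⟨rfl, by simp⟩)
  rw [hall] at hE
  exact ematch_irrefl _ hE

theorem stmt9 {k : ℕ} (h : Vtx → Vtx → Vtx → Vtx) (hh : HMinority Ematch h)
    (f : (Fin k → Vtx) → Vtx) (hqnu : IsQnu f)
    (hfE : PreservesRel f Ematch) (hfN : PreservesRel f (NRel Ematch))
    (hfuuE : PreservesRel f (uu Ematch))
    (R : Set (Fin 4 → Vtx)) (hRh : Preserves3 h R) (hRf : Preserves f R)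
    (hinv : AutoInvariant Ematch R) :
    (¬ (EffEntails R Ematch Ematch ∧
        Entails R (fun x₁ x₂ x₃ x₄ =>
          uu Ematch x₁ x₂ ∧ NRel Ematch x₂ x₃ ∧ uu Ematch x₃ x₄))) ∧
    (¬ (EffEntails R (fun a b => a = b) (fun a b => a = b) ∧
        Entails R (fun x₁ x₂ x₃ x₄ =>
          uu Ematch x₁ x₂ ∧ NRel Ematch x₂ x₃ ∧ uu Ematch x₃ x₄))) := by
  have hT1E01 : Ematch (T1c 0) (T1c 1) := ⟨rfl, by simp [T1c, quad]⟩
  have hT1E23 : Ematch (T1c 2) (T1c 3) := ⟨rfl, by simp [T1c, quad]⟩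
  have hT2n01 : ¬ Ematch (T2c 0) (T2c 1) := ematch_irrefl _
  have hT2n23 : ¬ Ematch (T2c 2) (T2c 3) := ematch_irrefl _
  constructor
  · rintro ⟨⟨himp, ⟨ta, hta, haE1, haE2⟩, ⟨tb, htb, hb1, hb2⟩⟩, hEnt⟩
    obtain ⟨ua1, na, ua3⟩ := hEnt ta hta
    have h02a : (ta 0).1 ≠ (ta 2).1 := by
      rw [show (ta 0).1 = (ta 1).1 from haE1.1]
      exact nrel_fst na
    have hT1 : T1c ∈ R :=
      T1c_mem hinv hta (flip_of_ematch haE1) (flip_of_ematch haE2) h02a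
    obtain ⟨ub1, nb, ub3⟩ := hEnt tb htb
    have htb1 : tb 1 = tb 0 := (uu_resolve ub1 hb1).symm
    have htb3 : tb 3 = tb 2 := (uu_resolve ub3 hb2).symm
    have h02b : (tb 0).1 ≠ (tb 2).1 := by
      rw [show (tb 0).1 = (tb 1).1 from by rw [htb1]]
      exact nrel_fst nb
    have hT2 : T2c ∈ R := T2c_mem hinv htb htb1 htb3 h02b
    have noB : ∀ t ∈ R, Ematch (t 2) (t 3) → Ematch (t 0) (t 1) := by
      intro s hs hE23
      by_contra hn01
      have hm := hRh s T1c T2c hs hT1 hT2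
      obtain ⟨us01, _, us23⟩ := hEnt s hs
      have hm01 : Ematch (h (s 0) (T1c 0) (T2c 0)) (h (s 1) (T1c 1) (T2c 1)) :=
        (hh.2 _ _ _ _ _ _ us01 (Or.inl hT1E01) (Or.inr rfl)).mpr
          (Or.inr (Or.inr (Or.inl ⟨hn01, hT1E01, hT2n01⟩)))
      have hm23 := himp _ hm hm01
      rcases (hh.2 (s 2) (T1c 2) (T2c 2) (s 3) (T1c 3) (T2c 3) us23
          (Or.inl hT1E23) (Or.inr rfl)).mp hm23 with
        ⟨_, _, hE'⟩ | ⟨_, hnE, _⟩ | ⟨hnE, _, _⟩ | ⟨hnE, _, _⟩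
      · exact hT2n23 hE'
      · exact hnE hT1E23
      · exact hnE hE23
      · exact hnE hE23
    exact mainLemma f hqnu hfE R hRf hinv hEnt hT1 hT2 himp noB
  · rintro ⟨⟨himp, ⟨ta, hta, ha1, ha2⟩, ⟨tb, htb, hb1, hb2⟩⟩, hEnt⟩
    obtain ⟨ua1, na, ua3⟩ := hEnt ta hta
    have hT2 : T2c ∈ R := by
      refine T2c_mem hinv hta ha1.symm ha2.symm ?_
      rw [show (ta 0).1 = (ta 1).1 from by rw [ha1]]
      exact nrel_fst na
    obtain ⟨ub1, nb, ub3⟩ := hEnt tb htb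
    have hbE1 : Ematch (tb 0) (tb 1) := ub1.resolve_right hb1
    have hbE2 : Ematch (tb 2) (tb 3) := ub3.resolve_right hb2
    have hT1 : T1c ∈ R := by
      refine T1c_mem hinv htb (flip_of_ematch hbE1) (flip_of_ematch hbE2) ?_
      rw [hbE1.1]
      exact nrel_fst nb
    have noB : ∀ t ∈ R, Ematch (t 2) (t 3) → Ematch (t 0) (t 1) := by
      intro s hs hE23
      obtain ⟨us01, _, _⟩ := hEnt s hs
      rcases us01 with hE | heq
      · exact hE
      · exfalso
        have h23 := himp s hs heq
        rw [h23] at hE23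
        exact ematch_irrefl _ hE23
    have noA : ∀ t ∈ R, Ematch (t 0) (t 1) → Ematch (t 2) (t 3) := by
      intro s hs hE01
      by_contra hn23
      obtain ⟨us01, _, us23⟩ := hEnt s hs
      have heq23 : s 2 = s 3 := uu_resolve us23 hn23
      have hm := hRh s T1c T2c hs hT1 hT2
      obtain ⟨um01, _, um23⟩ := hEnt _ hm
      have hn01m : ¬ Ematch (h (s 0) (T1c 0) (T2c 0)) (h (s 1) (T1c 1) (T2c 1)) := by
        intro hE
        rcases (hh.2 _ _ _ _ _ _ us01 (Or.inl hT1E01) (Or.inr rfl)).mp hE with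
          ⟨_, _, hE'⟩ | ⟨_, hnE, _⟩ | ⟨hnE, _, _⟩ | ⟨hnE, _, _⟩
        · exact hT2n01 hE'
        · exact hnE hT1E01
        · exact hnE hE01
        · exact hnE hE01
      have heqm : h (s 0) (T1c 0) (T2c 0) = h (s 1) (T1c 1) (T2c 1) :=
        uu_resolve um01 hn01m
      have heq23m := himp _ hm heqm
      have hE23m : Ematch (h (s 2) (T1c 2) (T2c 2)) (h (s 3) (T1c 3) (T2c 3)) :=
        (hh.2 _ _ _ _ _ _ us23 (Or.inl hT1E23) (Or.inr rfl)).mpr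
          (Or.inr (Or.inr (Or.inl
            ⟨by rw [heq23]; exact ematch_irrefl _, hT1E23, hT2n23⟩)))
      rw [show h (s 2) (T1c 2) (T2c 2) = h (s 3) (T1c 3) (T2c 3) from heq23m] at hE23m
      exact ematch_irrefl _ hE23m
    exact mainLemma f hqnu hfE R hRf hinv hEnt hT1 hT2 noA noB
end
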